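/- arXiv:2305.19666 — 4 statements merged into one kernel-verified Lean document; each statement's English description precedes it below -/
import Mathlib

section
/- Let X ~ Bin(n,p). Then for all 0 ≤ t ≤ p, P(X ≤ nt) ≤ exp(-n(√p - √t)²), and for all p ≤ t ≤ 1, P(X ≥ nt) ≤ exp(-2n(√t - √p)²). -/
/-!
Applying Markov's inequality to `x ^ X` with `x = t / p` and using `1 + y ≤ exp y` bounds either
tail by `exp (-n p klFun (t / p))`, the large-deviation rate of the Poisson distribution. It
remains to compare `klFun u = u log u + 1 - u` with `(√u - 1)²`: writing `u = s²`, the bound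
`klFun u ≥ (√u - 1)²` is `log s ≥ 1 - 1 / s`, and for `u ≥ 1` the bound
`klFun u ≥ 2 (√u - 1)²` follows from the sharper `log s ≥ 2 (s - 1) / (s + 1)`.
-/

open Finset Real

/-- Probability that a `Bin(n,p)` random variable takes value `k`. -/
noncomputable def binomPMF (n : ℕ) (p : ℝ) (k : ℕ) : ℝ :=
  (n.choose k : ℝ) * p ^ k * (1 - p) ^ (n - k)

open InformationTheory

theorem Finset.sum_ite_mul_le_sum_mul {ι R : Type*} [Semiring R] [PartialOrder R]
    [IsOrderedRing R] (s : Finset ι) (P : ι → Prop) [DecidablePred P] {f g : ι → R} {a : R}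
    (hf : ∀ i ∈ s, 0 ≤ f i) (hg : ∀ i ∈ s, 0 ≤ g i) (hP : ∀ i ∈ s, P i → a ≤ g i) :
    (∑ i ∈ s, if P i then f i else 0) * a ≤ ∑ i ∈ s, f i * g i := by
  rw [Finset.sum_mul]
  refine Finset.sum_le_sum fun i hi => ?_
  split_ifs with h
  · exact mul_le_mul_of_nonneg_left (hP i hi h) (hf i hi)
  · rw [zero_mul]
    exact mul_nonneg (hf i hi) (hg i hi)

theorem Real.two_mul_sub_one_div_add_one_le_log {x : ℝ} (hx : 1 ≤ x) :
    2 * (x - 1) / (x + 1) ≤ log x := by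
  have hx1 : 0 ≤ x - 1 := by linarith
  have hsum := hasSum_log_one_add hx1
  rw [add_sub_cancel] at hsum
  calc 2 * (x - 1) / (x + 1)
      = 2 * (1 / (2 * ((0 : ℕ) : ℝ) + 1)) * ((x - 1) / (x - 1 + 2)) ^ (2 * 0 + 1) := by
        norm_num
        ring_nf
    _ ≤ log x := le_hasSum hsum 0 fun k _ => by positivity

theorem klFun_sq (s : ℝ) : klFun (s ^ 2) = 2 * s ^ 2 * log s + 1 - s ^ 2 := by
  rw [klFun_apply, log_pow]
  push_cast
  ring

theorem sq_sqrt_sub_one_le_klFun {u : ℝ} (hu : 0 ≤ u) : (√u - 1) ^ 2 ≤ klFun u := by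
  obtain ⟨s, hs, rfl⟩ : ∃ s, 0 ≤ s ∧ u = s ^ 2 := ⟨√u, sqrt_nonneg u, (sq_sqrt hu).symm⟩
  rw [sqrt_sq hs, klFun_sq]
  rcases hs.eq_or_lt with rfl | hs
  · norm_num
  have hlog : 1 - s⁻¹ ≤ log s := one_sub_inv_le_log_of_pos hs
  have hmul : 2 * s ^ 2 * (1 - s⁻¹) = 2 * s ^ 2 - 2 * s := by field_simp
  linarith [mul_le_mul_of_nonneg_left hlog (by positivity : (0 : ℝ) ≤ 2 * s ^ 2)]

theorem two_mul_sq_sqrt_sub_one_le_klFun {u : ℝ} (hu : 1 ≤ u) : 2 * (√u - 1) ^ 2 ≤ klFun u := by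
  obtain ⟨s, hs, rfl⟩ : ∃ s, 1 ≤ s ∧ u = s ^ 2 :=
    ⟨√u, one_le_sqrt.mpr hu, (sq_sqrt (by linarith)).symm⟩
  rw [sqrt_sq (by linarith), klFun_sq]
  have key : 3 * s ^ 2 - 4 * s + 1 ≤ 2 * s ^ 2 * (2 * (s - 1) / (s + 1)) := by
    rw [mul_div_assoc', le_div_iff₀ (by linarith)]
    nlinarith [pow_nonneg (sub_nonneg.mpr hs) 3]
  have := mul_le_mul_of_nonneg_left (two_mul_sub_one_div_add_one_le_log hs)
    (by positivity : (0 : ℝ) ≤ 2 * s ^ 2)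
  linarith

theorem mul_sq_sqrt_div_sub_one {p : ℝ} (hp : 0 < p) (t : ℝ) :
    p * (√(t / p) - 1) ^ 2 = (√t - √p) ^ 2 := by
  have hsp : 0 < √p := sqrt_pos.mpr hp
  rw [sqrt_div' t hp.le]
  nth_rewrite 1 [← sq_sqrt hp.le]
  field_simp

theorem rpow_mul_exp_neg_mul_klFun {p t : ℝ} (hp : 0 < p) (ht : 0 ≤ t) :
    (t / p) ^ t * exp (-(p * klFun (t / p))) = exp (t - p) := by
  rcases ht.eq_or_lt with rfl | ht
  · simp [klFun_zero]
  rw [rpow_def_of_pos (by positivity), ← exp_add, klFun_apply]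
  congr 1
  field_simp
  ring

section Binomial

variable {n : ℕ} {p : ℝ}

theorem binomPMF_nonneg (hp0 : 0 ≤ p) (hp1 : p ≤ 1) (k : ℕ) : 0 ≤ binomPMF n p k := by
  have : 0 ≤ 1 - p := by linarith
  unfold binomPMF
  positivity

theorem sum_binomPMF_mul_pow (n : ℕ) (p x : ℝ) :
    ∑ k ∈ range (n + 1), binomPMF n p k * x ^ k = (p * x + (1 - p)) ^ n := by
  rw [add_pow]
  refine sum_congr rfl fun k _ => ?_
  unfold binomPMF
  ring

noncomputable def binomLowerTail (n : ℕ) (p c : ℝ) : ℝ :=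
  ∑ k ∈ range (n + 1), if (k : ℝ) ≤ c then binomPMF n p k else 0

noncomputable def binomUpperTail (n : ℕ) (p c : ℝ) : ℝ :=
  ∑ k ∈ range (n + 1), if c ≤ (k : ℝ) then binomPMF n p k else 0

theorem binomLowerTail_mul_rpow_le (hp0 : 0 ≤ p) (hp1 : p ≤ 1) {x : ℝ} (hx0 : 0 ≤ x)
    (hx1 : x ≤ 1) (c : ℝ) : binomLowerTail n p c * x ^ c ≤ (p * x + (1 - p)) ^ n := by
  rw [← sum_binomPMF_mul_pow]
  refine sum_ite_mul_le_sum_mul _ _ (fun k _ => binomPMF_nonneg hp0 hp1 k)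
    (fun k _ => by positivity) fun k _ hk => ?_
  rw [← rpow_natCast]
  exact rpow_le_rpow_of_exponent_ge' hx0 hx1 k.cast_nonneg hk

theorem binomUpperTail_mul_rpow_le (hp0 : 0 ≤ p) (hp1 : p ≤ 1) {x : ℝ} (hx : 1 ≤ x) (c : ℝ) :
    binomUpperTail n p c * x ^ c ≤ (p * x + (1 - p)) ^ n := by
  rw [← sum_binomPMF_mul_pow]
  refine sum_ite_mul_le_sum_mul _ _ (fun k _ => binomPMF_nonneg hp0 hp1 k)
    (fun k _ => by positivity) fun k _ hk => ?_
  rw [← rpow_natCast]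
  exact rpow_le_rpow_of_exponent_le hx hk

variable {t x E : ℝ}

theorem binomLowerTail_le_pow (hp0 : 0 ≤ p) (hp1 : p ≤ 1) (hx0 : 0 ≤ x) (hx1 : x ≤ 1)
    (hxt : 0 < x ^ t) (hE : p * x + (1 - p) ≤ x ^ t * E) :
    binomLowerTail n p (n * t) ≤ E ^ n := by
  refine le_of_mul_le_mul_right ?_ (pow_pos hxt n)
  calc binomLowerTail n p (n * t) * (x ^ t) ^ n
      = binomLowerTail n p (n * t) * x ^ ((n : ℝ) * t) := by
        rw [mul_comm (n : ℝ), rpow_mul_natCast hx0]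
    _ ≤ (p * x + (1 - p)) ^ n := binomLowerTail_mul_rpow_le hp0 hp1 hx0 hx1 _
    _ ≤ (x ^ t * E) ^ n := pow_le_pow_left₀ (by nlinarith) hE n
    _ = E ^ n * (x ^ t) ^ n := by ring

theorem binomUpperTail_le_pow (hp0 : 0 ≤ p) (hp1 : p ≤ 1) (hx : 1 ≤ x)
    (hE : p * x + (1 - p) ≤ x ^ t * E) : binomUpperTail n p (n * t) ≤ E ^ n := by
  have hx0 : 0 ≤ x := by linarith
  refine le_of_mul_le_mul_right ?_ (pow_pos (rpow_pos_of_pos (by linarith : (0 : ℝ) < x) t) n)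
  calc binomUpperTail n p (n * t) * (x ^ t) ^ n
      = binomUpperTail n p (n * t) * x ^ ((n : ℝ) * t) := by
        rw [mul_comm (n : ℝ), rpow_mul_natCast hx0]
    _ ≤ (p * x + (1 - p)) ^ n := binomUpperTail_mul_rpow_le hp0 hp1 hx _
    _ ≤ (x ^ t * E) ^ n := pow_le_pow_left₀ (by nlinarith) hE n
    _ = E ^ n * (x ^ t) ^ n := by ring

theorem mul_div_add_one_sub_le_rpow_mul_exp_neg_klFun (hp : 0 < p) (ht : 0 ≤ t) :
    p * (t / p) + (1 - p) ≤ (t / p) ^ t * exp (-(p * klFun (t / p))) := by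
  rw [rpow_mul_exp_neg_mul_klFun hp ht, mul_div_cancel₀ t hp.ne']
  linarith [add_one_le_exp (t - p)]

theorem binomLowerTail_le_exp_neg_klFun (hp0 : 0 < p) (hp1 : p ≤ 1) (ht0 : 0 ≤ t) (htp : t ≤ p) :
    binomLowerTail n p (n * t) ≤ exp (-(p * klFun (t / p))) ^ n := by
  refine binomLowerTail_le_pow hp0.le hp1 (by positivity) (div_le_one_of_le₀ htp hp0.le) ?_
    (mul_div_add_one_sub_le_rpow_mul_exp_neg_klFun hp0 ht0)
  have hpos := rpow_mul_exp_neg_mul_klFun hp0 ht0 ▸ exp_pos (t - p)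
  exact pos_of_mul_pos_left hpos (exp_pos _).le

theorem binomUpperTail_le_exp_neg_klFun (hp0 : 0 < p) (hp1 : p ≤ 1) (hpt : p ≤ t) :
    binomUpperTail n p (n * t) ≤ exp (-(p * klFun (t / p))) ^ n :=
  binomUpperTail_le_pow hp0.le hp1 ((one_le_div hp0).mpr hpt)
    (mul_div_add_one_sub_le_rpow_mul_exp_neg_klFun hp0 (hp0.le.trans hpt))

theorem binomLowerTail_le_exp_neg_sq_sub_sqrt (hp0 : 0 ≤ p) (hp1 : p ≤ 1) (ht0 : 0 ≤ t)
    (htp : t ≤ p) : binomLowerTail n p (n * t) ≤ exp (-n * (√p - √t) ^ 2) := by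
  rcases hp0.eq_or_lt with rfl | hp
  · obtain rfl : t = 0 := le_antisymm htp ht0
    simpa using binomLowerTail_le_pow (n := n) (t := 0) (E := 1) le_rfl zero_le_one
      zero_le_one le_rfl (by simp) (by simp)
  calc binomLowerTail n p (n * t) ≤ exp (-(p * klFun (t / p))) ^ n :=
        binomLowerTail_le_exp_neg_klFun hp hp1 ht0 htp
    _ ≤ exp (-(√p - √t) ^ 2) ^ n := by
        rw [sub_sq_comm, ← mul_sq_sqrt_div_sub_one hp]
        gcongr
        exact sq_sqrt_sub_one_le_klFun (by positivity)
    _ = _ := by rw [← exp_nat_mul]; ring_nf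

theorem binomUpperTail_le_exp_neg_two_mul_sq_sub_sqrt (hp0 : 0 ≤ p) (hp1 : p ≤ 1) (hpt : p ≤ t) :
    binomUpperTail n p (n * t) ≤ exp (-2 * n * (√t - √p) ^ 2) := by
  rcases hp0.eq_or_lt with rfl | hp
  · -- `x = t / p` is unavailable, but the weight `x = e²` gives the bound directly.
    have hE : 0 * exp 2 + (1 - 0) ≤ exp 2 ^ t * exp (-(2 * t)) := by
      rw [← exp_mul, ← exp_add]
      simp
    calc binomUpperTail n 0 (n * t) ≤ exp (-(2 * t)) ^ n :=
          binomUpperTail_le_pow le_rfl zero_le_one (one_le_exp (by norm_num)) hE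
      _ = _ := by rw [← exp_nat_mul, sqrt_zero, sub_zero, sq_sqrt hpt]; ring_nf
  calc binomUpperTail n p (n * t) ≤ exp (-(p * klFun (t / p))) ^ n :=
        binomUpperTail_le_exp_neg_klFun hp hp1 hpt
    _ ≤ exp (-(2 * (√t - √p) ^ 2)) ^ n := by
        rw [← mul_sq_sqrt_div_sub_one hp, mul_left_comm]
        gcongr
        exact two_mul_sq_sqrt_sub_one_le_klFun ((one_le_div hp).mpr hpt)
    _ = _ := by rw [← exp_nat_mul]; ring_nf

end Binomial

/-- Okamoto's tail bounds on the binomial distribution: for `X ~ Bin(n,p)`,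
`P(X ≤ nt) ≤ exp (-n (√p - √t)²)` for `0 ≤ t ≤ p`, and
`P(X ≥ nt) ≤ exp (-2n (√t - √p)²)` for `p ≤ t ≤ 1`. -/
theorem binomial_tail_bounds (n : ℕ) (p : ℝ) (hp0 : 0 ≤ p) (hp1 : p ≤ 1) (t : ℝ) :
    (0 ≤ t → t ≤ p →
      ∑ k ∈ Finset.range (n + 1), (if (k : ℝ) ≤ n * t then binomPMF n p k else 0) ≤
        Real.exp (-(n : ℝ) * (Real.sqrt p - Real.sqrt t) ^ 2)) ∧
    (p ≤ t → t ≤ 1 →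
      ∑ k ∈ Finset.range (n + 1), (if (n : ℝ) * t ≤ k then binomPMF n p k else 0) ≤
        Real.exp (-2 * (n : ℝ) * (Real.sqrt t - Real.sqrt p) ^ 2)) :=
  ⟨binomLowerTail_le_exp_neg_sq_sub_sqrt hp0 hp1,
    fun hpt _ => binomUpperTail_le_exp_neg_two_mul_sq_sub_sqrt hp0 hp1 hpt⟩
end

section
/- Let {x₁,...,x_N} be a finite multiset of reals and let X₁,...,Xₙ (n < N) be drawn uniformly from it without replacement. With a = minᵢ xᵢ, b = maxᵢ xᵢ, x̄ = (1/N)Σᵢ xᵢ, σ² = (1/N)Σᵢ(xᵢ - x̄)², for any t > 0 we have P(|Σᵢ₌₁ⁿ Xᵢ - n·x̄| ≥ t) ≤ 2·exp(-(t²/2)/(σ²n + (b-a)t/3)). -/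
/-!
Chernoff's method: `P(S ≥ t) ≤ e^{-θt} E[e^{θS}]` with `S = ∑ᵢ y(Xᵢ)` the centred sample sum.
For samples without replacement and nonnegative weights `w`, `E[∏ᵢ w(Xᵢ)] ≤ (E[w(X₁)])ⁿ`
(a Maclaurin-type inequality). It is proved one draw at a time: averaged over the first `k`
draws, the mean of the not-yet-drawn weights is at most the population mean, by AM-GM together
with the symmetry that exchanges the first draw with a later one. The one-draw moment generating
function is bounded through `eᶻ ≤ 1 + z + z² / (2 (1 - |z| / 3))`, which gives
`E[e^{θ y(X₁)}] ≤ exp (σ² θ² / (2 (1 - θ M / 3)))`, and the choice `θ = t / (σ² n + M t / 3)`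
yields Bernstein's exponent. The two tails are added.
-/

open Finset

open Nat in
theorem Real.exp_le_one_add_add_sq_div {z u : ℝ} (hz : |z| ≤ u) (hu : u < 3) :
    Real.exp z ≤ 1 + z + z ^ 2 / (2 * (1 - u / 3)) := by
  have hr : u / 3 < 1 := by linarith
  have hu0 : 0 ≤ u := (abs_nonneg z).trans hz
  have hr0 : 0 ≤ u / 3 := by positivity
  have hterm (k : ℕ) : z ^ (k + 2) / (k + 2)! ≤ z ^ 2 / 2 * (u / 3) ^ k := by
    have hfact : (2 * 3 ^ k : ℝ) ≤ (k + 2)! := by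
      rw [add_comm k]
      exact_mod_cast Nat.factorial_mul_pow_le_factorial (m := 2) (n := k)
    have hpow : z ^ (k + 2) ≤ z ^ 2 * u ^ k := by
      have hzk : z ^ k ≤ u ^ k :=
        (le_abs_self _).trans ((abs_pow z k).trans_le (pow_le_pow_left₀ (abs_nonneg z) hz k))
      rw [pow_add, mul_comm]
      exact mul_le_mul_of_nonneg_left hzk (sq_nonneg z)
    calc z ^ (k + 2) / (k + 2)! ≤ z ^ 2 * u ^ k / (2 * 3 ^ k) :=
          div_le_div₀ (by positivity) hpow (by positivity) hfact
      _ = z ^ 2 / 2 * (u / 3) ^ k := by rw [div_pow]; ring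
  have hsum := Real.summable_pow_div_factorial z
  calc Real.exp z = ∑ k ∈ range 2, z ^ k / k ! + ∑' k, z ^ (k + 2) / (k + 2)! := by
        rw [Real.exp_eq_exp_ℝ, NormedSpace.exp_eq_tsum_div, hsum.sum_add_tsum_nat_add 2]
    _ ≤ 1 + z + ∑' k : ℕ, z ^ 2 / 2 * (u / 3) ^ k := by
        have := Summable.tsum_le_tsum hterm ((summable_nat_add_iff 2).mpr hsum)
          ((summable_geometric_of_lt_one hr0 hr).mul_left _)
        rw [show ∑ k ∈ range 2, z ^ k / k ! = 1 + z by simp [sum_range_succ]]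
        linarith
    _ = 1 + z + z ^ 2 / (2 * (1 - u / 3)) := by
        rw [tsum_mul_left, tsum_geometric_of_lt_one hr0 hr]
        field_simp

section Sampling

variable {α : Type*} [Fintype α] {k n : ℕ}

theorem sum_embedding_fin_succ [DecidableEq α] {β : Type*} [AddCommMonoid β]
    (H : (Fin k ↪ α) → α → β) :
    ∑ f : Fin (k + 1) ↪ α, H ((Fin.succEmb k).trans f) (f 0) =
      ∑ g : Fin k ↪ α, ∑ a ∈ (univ.map g)ᶜ, H g a := by
  rw [← (Equiv.embeddingFinSucc k α).symm.sum_comp, Fintype.sum_sigma]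
  refine sum_congr rfl fun g _ => ?_
  have hg (a : {a // a ∉ Set.range g}) :
      (Fin.succEmb k).trans ((Equiv.embeddingFinSucc k α).symm ⟨g, a⟩) = g := by
    ext i; simp
  simp only [hg, Equiv.coe_embeddingFinSucc_symm, Fin.cons_zero]
  exact (sum_subtype _ (fun a => by simp) (H g)).symm

theorem sum_embedding_fin_succ_tail [DecidableEq α] (hk : k ≤ Fintype.card α)
    (G : (Fin k ↪ α) → ℝ) :
    ∑ f : Fin (k + 1) ↪ α, G ((Fin.succEmb k).trans f) = (Fintype.card α - k) * ∑ g, G g := by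
  rw [sum_embedding_fin_succ (fun g _ => G g), mul_sum]
  refine sum_congr rfl fun g _ => ?_
  rw [sum_const, card_compl, card_map, card_univ, Fintype.card_fin, nsmul_eq_mul,
    Nat.cast_sub hk]

theorem sum_embedding_fin_succ_head_mul [DecidableEq α] (w : α → ℝ) (G : (Fin k ↪ α) → ℝ) :
    ∑ f : Fin (k + 1) ↪ α, w (f 0) * G ((Fin.succEmb k).trans f) =
      ∑ g, (∑ a, w a - ∑ i, w (g i)) * G g := by
  rw [sum_embedding_fin_succ (fun g a => w a * G g)]
  refine sum_congr rfl fun g _ => ?_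
  rw [← sum_mul, ← sum_compl_add_sum (univ.map g), sum_map]
  ring

theorem sum_head_mul_prod_tail_le (w : α → ℝ) (hw : 0 ≤ w) (i : Fin k) :
    ∑ f : Fin (k + 1) ↪ α, w (f 0) * ∏ l : Fin k, w (f l.succ) ≤
      ∑ f : Fin (k + 1) ↪ α, w (f i.succ) * ∏ l : Fin k, w (f l.succ) := by
  set Q : (Fin (k + 1) ↪ α) → ℝ := fun f => ∏ l ∈ univ.erase i, w (f (Fin.succ l))
  have hQ (f : Fin (k + 1) ↪ α) : ∏ l : Fin k, w (f l.succ) = w (f i.succ) * Q f :=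
    (mul_prod_erase _ _ (mem_univ i)).symm
  -- exchanging the draws `0` and `i.succ` preserves the uniform distribution
  have hswap : ∑ f : Fin (k + 1) ↪ α, w (f 0) ^ 2 * Q f = ∑ f, w (f i.succ) ^ 2 * Q f := by
    let σ := Equiv.swap (0 : Fin (k + 1)) i.succ
    rw [← (Equiv.embeddingCongr σ (Equiv.refl α)).sum_comp]
    refine sum_congr rfl fun f _ => ?_
    have hQσ : Q (Equiv.embeddingCongr σ (Equiv.refl α) f) = Q f :=
      prod_congr rfl fun l hl => by
        simp [σ, Equiv.swap_apply_of_ne_of_ne (Fin.succ_ne_zero l)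
          (Fin.succ_injective _ |>.ne (ne_of_mem_erase hl))]
    rw [hQσ]
    simp [σ]
  calc ∑ f : Fin (k + 1) ↪ α, w (f 0) * ∏ l : Fin k, w (f l.succ)
      ≤ ∑ f : Fin (k + 1) ↪ α, (w (f 0) ^ 2 + w (f i.succ) ^ 2) / 2 * Q f := by
        refine sum_le_sum fun f _ => ?_
        rw [hQ, ← mul_assoc]
        have : 0 ≤ Q f := prod_nonneg fun l _ => hw _
        gcongr
        nlinarith [sq_nonneg (w (f 0) - w (f i.succ))]
    _ = (∑ f : Fin (k + 1) ↪ α, w (f 0) ^ 2 * Q f + ∑ f, w (f i.succ) ^ 2 * Q f) / 2 := by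
        rw [← sum_add_distrib, sum_div]
        exact sum_congr rfl fun f _ => by ring
    _ = ∑ f : Fin (k + 1) ↪ α, w (f i.succ) * ∏ l : Fin k, w (f l.succ) := by
        rw [hswap, add_self_div_two]
        exact sum_congr rfl fun f _ => by rw [hQ]; ring

theorem card_mul_sum_prod_succ_le (w : α → ℝ) (hw : 0 ≤ w) (hk : k ≤ Fintype.card α) :
    Fintype.card α * ∑ f : Fin (k + 1) ↪ α, ∏ i, w (f i) ≤
      (Fintype.card α - k) * (∑ a, w a) * ∑ g : Fin k ↪ α, ∏ i, w (g i) := by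
  classical
  set R := ∑ g : Fin k ↪ α, (∏ i, w (g i)) * ∑ i, w (g i)
  have hhead : ∑ f : Fin (k + 1) ↪ α, ∏ i, w (f i) =
      (∑ a, w a) * ∑ g : Fin k ↪ α, ∏ i, w (g i) - R := by
    simp only [Fin.prod_univ_succ]
    refine (sum_embedding_fin_succ_head_mul w fun g => ∏ i, w (g i)).trans ?_
    rw [mul_sum, ← sum_sub_distrib]
    exact sum_congr rfl fun g _ => by ring
  have htail : ∑ f : Fin (k + 1) ↪ α, (∏ i : Fin k, w (f i.succ)) * ∑ i : Fin k, w (f i.succ) =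
      (Fintype.card α - k) * R :=
    sum_embedding_fin_succ_tail hk fun g => (∏ i, w (g i)) * ∑ i, w (g i)
  have hswap : k * ∑ f : Fin (k + 1) ↪ α, ∏ i, w (f i) ≤
      ∑ f : Fin (k + 1) ↪ α, (∏ i : Fin k, w (f i.succ)) * ∑ i : Fin k, w (f i.succ) := by
    calc (k : ℝ) * ∑ f : Fin (k + 1) ↪ α, ∏ i, w (f i)
        = ∑ i : Fin k, ∑ f : Fin (k + 1) ↪ α, w (f 0) * ∏ l : Fin k, w (f l.succ) := by
          simp [Fin.prod_univ_succ]
      _ ≤ ∑ i : Fin k, ∑ f : Fin (k + 1) ↪ α, w (f i.succ) * ∏ l : Fin k, w (f l.succ) :=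
          sum_le_sum fun i _ => sum_head_mul_prod_tail_le w hw i
      _ = _ := by
          rw [sum_comm]
          refine sum_congr rfl fun f _ => ?_
          rw [mul_sum]
          exact sum_congr rfl fun i _ => mul_comm _ _
  rw [hhead] at hswap ⊢
  linarith

theorem card_pow_mul_sum_prod_le (w : α → ℝ) (hw : 0 ≤ w) (hk : k ≤ Fintype.card α) :
    Fintype.card α ^ k * ∑ f : Fin k ↪ α, ∏ i, w (f i) ≤
      (Fintype.card α).descFactorial k * (∑ a, w a) ^ k := by
  induction k with
  | zero => simp
  | succ k ih =>
    have hk' : k ≤ Fintype.card α := k.le_succ.trans hk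
    have hT : 0 ≤ ∑ a, w a := sum_nonneg fun a _ => hw a
    have hNk : (0 : ℝ) ≤ Fintype.card α - k := by
      rw [sub_nonneg]; exact_mod_cast hk'
    calc (Fintype.card α : ℝ) ^ (k + 1) * ∑ f : Fin (k + 1) ↪ α, ∏ i, w (f i)
        = Fintype.card α ^ k * (Fintype.card α * ∑ f : Fin (k + 1) ↪ α, ∏ i, w (f i)) := by
          ring
      _ ≤ Fintype.card α ^ k * ((Fintype.card α - k) * (∑ a, w a) *
            ∑ g : Fin k ↪ α, ∏ i, w (g i)) :=
          mul_le_mul_of_nonneg_left (card_mul_sum_prod_succ_le w hw (Nat.lt_of_succ_le hk).le)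
            (by positivity)
      _ = (Fintype.card α - k) * (∑ a, w a) *
            (Fintype.card α ^ k * ∑ g : Fin k ↪ α, ∏ i, w (g i)) := by ring
      _ ≤ (Fintype.card α - k) * (∑ a, w a) *
            ((Fintype.card α).descFactorial k * (∑ a, w a) ^ k) :=
          mul_le_mul_of_nonneg_left (ih hk') (mul_nonneg hNk hT)
      _ = (Fintype.card α).descFactorial (k + 1) * (∑ a, w a) ^ (k + 1) := by
          rw [Nat.descFactorial_succ, Nat.cast_mul, Nat.cast_sub hk']
          ring

theorem card_filter_le_exp_mul_sum_exp {β : Type*} [Fintype β] (s : β → ℝ) {θ : ℝ}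
    (hθ : 0 ≤ θ) (t : ℝ) :
    (#{b | t ≤ s b} : ℝ) ≤ Real.exp (-(θ * t)) * ∑ b, Real.exp (θ * s b) := by
  calc (#{b | t ≤ s b} : ℝ) = ∑ b ∈ {b | t ≤ s b}, 1 := by simp
    _ ≤ ∑ b ∈ {b | t ≤ s b}, Real.exp (θ * (s b - t)) :=
        sum_le_sum fun b hb => Real.one_le_exp
          (mul_nonneg hθ (sub_nonneg.mpr (mem_filter.mp hb).2))
    _ ≤ ∑ b, Real.exp (θ * (s b - t)) :=
        sum_le_sum_of_subset_of_nonneg (subset_univ _) fun b _ _ => (Real.exp_pos _).le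
    _ = Real.exp (-(θ * t)) * ∑ b, Real.exp (θ * s b) := by
        rw [mul_sum]
        exact sum_congr rfl fun b _ => by rw [← Real.exp_add]; ring_nf

theorem sum_exp_mul_le (y : α → ℝ) {M σ2 θ : ℝ} (hy0 : ∑ a, y a = 0) (hyM : ∀ a, |y a| ≤ M)
    (hyv : ∑ a, y a ^ 2 ≤ Fintype.card α * σ2) (hθ : 0 ≤ θ) (hθM : θ * M < 3) :
    ∑ a, Real.exp (θ * y a) ≤
      Fintype.card α * Real.exp (σ2 * θ ^ 2 / (2 * (1 - θ * M / 3))) := by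
  have hc : 0 < 2 * (1 - θ * M / 3) := by linarith
  calc ∑ a, Real.exp (θ * y a)
      ≤ ∑ a, (1 + θ * y a + (θ * y a) ^ 2 / (2 * (1 - θ * M / 3))) :=
        sum_le_sum fun a _ => Real.exp_le_one_add_add_sq_div
          (by rw [abs_mul, abs_of_nonneg hθ]; exact mul_le_mul_of_nonneg_left (hyM a) hθ) hθM
    _ = Fintype.card α + θ * ∑ a, y a +
          θ ^ 2 / (2 * (1 - θ * M / 3)) * ∑ a, y a ^ 2 := by
        simp only [sum_add_distrib, mul_sum, sum_const, card_univ, nsmul_eq_mul, mul_one]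
        exact congrArg _ (sum_congr rfl fun a _ => by ring)
    _ ≤ Fintype.card α + θ ^ 2 / (2 * (1 - θ * M / 3)) * (Fintype.card α * σ2) := by
        rw [hy0, mul_zero, add_zero]; gcongr
    _ = Fintype.card α * (σ2 * θ ^ 2 / (2 * (1 - θ * M / 3)) + 1) := by ring
    _ ≤ Fintype.card α * Real.exp (σ2 * θ ^ 2 / (2 * (1 - θ * M / 3))) := by
        gcongr; exact Real.add_one_le_exp _

theorem card_filter_le_descFactorial_mul_exp (y : α → ℝ) {M σ2 θ : ℝ} (hn : n ≤ Fintype.card α)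
    (hy0 : ∑ a, y a = 0) (hyM : ∀ a, |y a| ≤ M) (hyv : ∑ a, y a ^ 2 ≤ Fintype.card α * σ2)
    (hθ : 0 ≤ θ) (hθM : θ * M < 3) (t : ℝ) :
    (#{f : Fin n ↪ α | t ≤ ∑ i, y (f i)} : ℝ) ≤ (Fintype.card α).descFactorial n *
      Real.exp (n * (σ2 * θ ^ 2 / (2 * (1 - θ * M / 3))) - θ * t) := by
  set v := σ2 * θ ^ 2 / (2 * (1 - θ * M / 3))
  have hNn : (0 : ℝ) < Fintype.card α ^ n := by
    rcases n.eq_zero_or_pos with rfl | hn0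
    · simp
    · exact pow_pos (by exact_mod_cast hn0.trans_le hn) n
  have hprod : ∑ f : Fin n ↪ α, ∏ i, Real.exp (θ * y (f i)) ≤
      (Fintype.card α).descFactorial n * Real.exp (n * v) := by
    refine le_of_mul_le_mul_left ?_ hNn
    calc (Fintype.card α : ℝ) ^ n * ∑ f : Fin n ↪ α, ∏ i, Real.exp (θ * y (f i))
        ≤ (Fintype.card α).descFactorial n * (∑ a, Real.exp (θ * y a)) ^ n :=
          card_pow_mul_sum_prod_le (fun a => Real.exp (θ * y a)) (fun a => (Real.exp_pos _).le) hn
      _ ≤ (Fintype.card α).descFactorial n * (Fintype.card α * Real.exp v) ^ n := by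
          gcongr
          exact sum_exp_mul_le y hy0 hyM hyv hθ hθM
      _ = Fintype.card α ^ n * ((Fintype.card α).descFactorial n * Real.exp (n * v)) := by
          rw [mul_pow, ← Real.exp_nat_mul]; ring
  calc (#{f : Fin n ↪ α | t ≤ ∑ i, y (f i)} : ℝ)
      ≤ Real.exp (-(θ * t)) * ∑ f : Fin n ↪ α, Real.exp (θ * ∑ i, y (f i)) :=
        card_filter_le_exp_mul_sum_exp _ hθ t
    _ = Real.exp (-(θ * t)) * ∑ f : Fin n ↪ α, ∏ i, Real.exp (θ * y (f i)) := by
        simp only [mul_sum, Real.exp_sum]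
    _ ≤ Real.exp (-(θ * t)) * ((Fintype.card α).descFactorial n * Real.exp (n * v)) := by
        gcongr
    _ = (Fintype.card α).descFactorial n * Real.exp (n * v - θ * t) := by
        rw [sub_eq_add_neg, Real.exp_add]; ring

theorem card_filter_le_bernstein (y : α → ℝ) {M σ2 t : ℝ} (hn : n ≤ Fintype.card α)
    (hy0 : ∑ a, y a = 0) (hyM : ∀ a, |y a| ≤ M) (hyv : ∑ a, y a ^ 2 ≤ Fintype.card α * σ2)
    (ht : 0 < t) :
    (#{f : Fin n ↪ α | t ≤ ∑ i, y (f i)} : ℝ) ≤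
      (Fintype.card α).descFactorial n * Real.exp (-(t ^ 2 / 2) / (σ2 * n + M * t / 3)) := by
  by_cases hv : 0 < σ2 * n
  · have hn0 : 0 < n := Nat.pos_of_ne_zero fun h => by simp [h] at hv
    obtain ⟨a⟩ := Fintype.card_pos_iff.mp (hn0.trans_le hn)
    have hM : 0 ≤ M := (abs_nonneg _).trans (hyM a)
    set D := σ2 * n + M * t / 3 with hD_def
    have hD : 0 < D := by positivity
    have hθM : t / D * M < 3 := by
      rw [div_mul_eq_mul_div, div_lt_iff₀ hD]; linarith
    have hexponent : n * (σ2 * (t / D) ^ 2 / (2 * (1 - t / D * M / 3))) - t / D * t =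
        -(t ^ 2 / 2) / D := by
      have h : 1 - t / D * M / 3 = σ2 * n / D := by
        field_simp
        linarith
      have hσ : σ2 ≠ 0 := by rintro rfl; simp at hv
      rw [h]
      field_simp
      ring
    rw [← hexponent]
    exact card_filter_le_descFactorial_mul_exp y hn hy0 hyM hyv (by positivity) hθM t
  · have hzero (f : Fin n ↪ α) : ∑ i, y (f i) = 0 := by
      rcases n.eq_zero_or_pos with rfl | hn0
      · simp
      have hσ : σ2 ≤ 0 := by
        by_contra! hσ
        exact hv (mul_pos hσ (by exact_mod_cast hn0))
      have hy2 : ∑ a, y a ^ 2 = 0 :=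
        le_antisymm (hyv.trans (mul_nonpos_of_nonneg_of_nonpos (by positivity) hσ))
          (sum_nonneg fun a _ => sq_nonneg _)
      have hy (a : α) : y a = 0 :=
        pow_eq_zero_iff two_ne_zero |>.mp <|
          (sum_eq_zero_iff_of_nonneg fun a _ => sq_nonneg (y a)).mp hy2 a (mem_univ a)
      simp [hy]
    have hempty : #{f : Fin n ↪ α | t ≤ ∑ i, y (f i)} = 0 := by
      rw [card_eq_zero, filter_eq_empty_iff]
      intro f _
      rw [hzero]
      exact not_le.mpr ht
    rw [hempty, Nat.cast_zero]
    positivity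

theorem card_filter_abs_div_card_le_bernstein (y : α → ℝ) {M σ2 t : ℝ}
    (hn : n ≤ Fintype.card α) (hy0 : ∑ a, y a = 0) (hyM : ∀ a, |y a| ≤ M)
    (hyv : ∑ a, y a ^ 2 ≤ Fintype.card α * σ2) (ht : 0 < t) :
    (#{f : Fin n ↪ α | t ≤ |∑ i, y (f i)|} : ℝ) / #(univ : Finset (Fin n ↪ α)) ≤
      2 * Real.exp (-(t ^ 2 / 2) / (σ2 * n + M * t / 3)) := by
  classical
  have hsplit : #{f : Fin n ↪ α | t ≤ |∑ i, y (f i)|} ≤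
      #{f : Fin n ↪ α | t ≤ ∑ i, y (f i)} + #{f : Fin n ↪ α | t ≤ ∑ i, (-y) (f i)} := by
    refine (card_le_card fun f hf => ?_).trans (card_union_le _ _)
    simpa [le_abs', le_neg, or_comm] using hf
  have hpos : (0 : ℝ) < (Fintype.card α).descFactorial n := by
    exact_mod_cast Nat.descFactorial_pos.mpr hn
  rw [card_univ, Fintype.card_embedding_eq, Fintype.card_fin, div_le_iff₀ hpos]
  calc (#{f : Fin n ↪ α | t ≤ |∑ i, y (f i)|} : ℝ)
      ≤ #{f : Fin n ↪ α | t ≤ ∑ i, y (f i)} + #{f : Fin n ↪ α | t ≤ ∑ i, (-y) (f i)} := by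
        exact_mod_cast hsplit
    _ ≤ _ := add_le_add (card_filter_le_bernstein y hn hy0 hyM hyv ht)
        (card_filter_le_bernstein (-y) hn (by simp [hy0]) (by simpa using hyM)
          (by simpa using hyv) ht)
    _ = _ := by ring

end Sampling

theorem abs_sub_le_ciSup_sub_ciInf_of_sum_eq {ι : Type*} [Fintype ι] (x : ι → ℝ) {m : ℝ}
    (hm : ∑ j, x j = Fintype.card ι * m) (i : ι) :
    |x i - m| ≤ (⨆ j, x j) - ⨅ j, x j := by
  have hι : (0 : ℝ) < Fintype.card ι := by exact_mod_cast Fintype.card_pos_iff.mpr ⟨i⟩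
  have hlo (j : ι) : ⨅ j, x j ≤ x j := ciInf_le (Set.finite_range x).bddBelow j
  have hhi (j : ι) : x j ≤ ⨆ j, x j := le_ciSup (Set.finite_range x).bddAbove j
  refine abs_sub_le_of_le_of_le (hlo i) (hhi i) ?_ ?_
  · refine le_of_mul_le_mul_left ?_ hι
    simpa [← hm] using sum_le_sum fun j (_ : j ∈ univ) => hlo j
  · refine le_of_mul_le_mul_left ?_ hι
    simpa [← hm] using sum_le_sum fun j (_ : j ∈ univ) => hhi j

theorem bernstein_sampling_without_replacement_general
    (N n : ℕ) (hn : n < N) (x : Fin N → ℝ)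
    (a b xbar σ2 : ℝ)
    (ha : a = ⨅ i, x i) (hb : b = ⨆ i, x i)
    (hxbar : xbar = (1 / (N : ℝ)) * ∑ i, x i)
    (hσ : σ2 = (1 / (N : ℝ)) * ∑ i, (x i - xbar) ^ 2)
    (t : ℝ) (ht : 0 < t) :
    haveI := Classical.decPred fun f : Fin n ↪ Fin N => t ≤ |(∑ i, x (f i)) - n * xbar|
    ((Finset.univ.filter
        (fun f : Fin n ↪ Fin N => t ≤ |(∑ i, x (f i)) - n * xbar|)).card : ℝ) /
        ((Finset.univ : Finset (Fin n ↪ Fin N)).card : ℝ) ≤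
      2 * Real.exp (-(t ^ 2 / 2) / (σ2 * n + (b - a) * t / 3)) := by
  have hN : (0 : ℝ) < N := by exact_mod_cast n.zero_le.trans_lt hn
  have hsum : ∑ i, x i = N * xbar := by rw [hxbar]; field_simp
  set y : Fin N → ℝ := fun i => x i - xbar
  have hy0 : ∑ i, y i = 0 := by simp [y, sum_sub_distrib, hsum]
  have hyM (i : Fin N) : |y i| ≤ b - a :=
    ha ▸ hb ▸ abs_sub_le_ciSup_sub_ciInf_of_sum_eq x (by simpa using hsum) i
  have hyv : ∑ i, y i ^ 2 = N * σ2 := by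
    rw [hσ, ← mul_assoc, mul_one_div_cancel hN.ne', one_mul]
  have hdev (f : Fin n ↪ Fin N) : ∑ i, x (f i) - n * xbar = ∑ i, y (f i) := by
    simp [y, sum_sub_distrib]
  convert card_filter_abs_div_card_le_bernstein y (by simpa using hn.le) hy0 hyM
    (by simpa using hyv.le) ht using 4
  exact filter_congr fun f _ => by rw [hdev]

/-- Bernstein's inequality for sampling without replacement: drawing `n < N` values
uniformly without replacement (i.e. a uniformly random injection `Fin n ↪ Fin N`) from a
finite population `x : Fin N → ℝ`, with `a = min xᵢ`, `b = max xᵢ`, `x̄` the population mean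
and `σ²` the population variance, for any `t > 0` the probability that
`|∑ Xᵢ - n x̄| ≥ t` is at most `2 exp (-(t²/2)/(σ² n + (b-a) t / 3))`. -/
theorem bernstein_sampling_without_replacement
    (N n : ℕ) (hN : 0 < N) (hn : n < N) (x : Fin N → ℝ)
    (a b xbar σ2 : ℝ)
    (ha : a = ⨅ i, x i) (hb : b = ⨆ i, x i)
    (hxbar : xbar = (1 / (N : ℝ)) * ∑ i, x i)
    (hσ : σ2 = (1 / (N : ℝ)) * ∑ i, (x i - xbar) ^ 2)
    (t : ℝ) (ht : 0 < t) :
    haveI := Classical.decPred fun f : Fin n ↪ Fin N => t ≤ |(∑ i, x (f i)) - n * xbar|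
    ((Finset.univ.filter
        (fun f : Fin n ↪ Fin N => t ≤ |(∑ i, x (f i)) - n * xbar|)).card : ℝ) /
        ((Finset.univ : Finset (Fin n ↪ Fin N)).card : ℝ) ≤
      2 * Real.exp (-(t ^ 2 / 2) / (σ2 * n + (b - a) * t / 3)) :=
  bernstein_sampling_without_replacement_general N n hn x a b xbar σ2 ha hb hxbar hσ t ht
end

section
/- Suppose n vertices are independently assigned one of k community labels, where label i is chosen with probability rᵢ, Σᵢ rᵢ = 1, and each rᵢ = Θ(1/k). If k = o(n^{1/5}), then with probability tending to 1 as n → ∞: (i) every community size nᵢ satisfies nᵢ = Θ(n/k), and (ii) all k community sizes n₁,...,n_k are pairwise distinct. -/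
open Finset Filter

/-!
Chebyshev's inequality, with `Var nₐ = n rₐ (1 - rₐ)`, shows that a fixed community size leaves
the window `n rₐ ± c₁ n / (2k)` with probability `O(k / n)`, hence some size does with
probability `O(k² / n)`.

For the distinctness, fix labels `i ≠ j` and resample: draw every label from `r`, then replace
each label in `{i, j}` by `i` or `j` according to an independent coin with bias
`rᵢ / (rᵢ + rⱼ)`; this reproduces the law of the labelling. Conditionally on the
set `M` of vertices whose first label lies in `{i, j}`, `nᵢ` is binomial on `M`, so
`P(nᵢ = nⱼ = t) ≤ C(2t, t) / 4ᵗ ≤ 1 / √(3t + 1)`. Balanced sizes are at least `c₁ n / (2k)`, so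
a union bound over the `k²` pairs costs `O(k² √(k / n))`. Both error terms are `O(√(k⁵ / n))`.
-/

theorem Nat.centralBinom_sq_mul_le (t : ℕ) : t.centralBinom ^ 2 * (3 * t + 1) ≤ 16 ^ t := by
  induction t with
  | zero => simp
  | succ t ih =>
    have hpoly : (2 * (2 * t + 1)) ^ 2 * (3 * t + 4) ≤ 16 * (t + 1) ^ 2 * (3 * t + 1) := by
      ring_nf; omega
    refine Nat.le_of_mul_le_mul_left ?_ (by positivity : 0 < (t + 1) ^ 2)
    calc (t + 1) ^ 2 * ((t + 1).centralBinom ^ 2 * (3 * (t + 1) + 1))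
        = ((t + 1) * (t + 1).centralBinom) ^ 2 * (3 * t + 4) := by ring
      _ = (2 * (2 * t + 1)) ^ 2 * (3 * t + 4) * t.centralBinom ^ 2 := by
          rw [Nat.succ_mul_centralBinom_succ]; ring
      _ ≤ 16 * (t + 1) ^ 2 * (3 * t + 1) * t.centralBinom ^ 2 := Nat.mul_le_mul_right _ hpoly
      _ = 16 * (t + 1) ^ 2 * (t.centralBinom ^ 2 * (3 * t + 1)) := by ring
      _ ≤ 16 * (t + 1) ^ 2 * 16 ^ t := Nat.mul_le_mul_left _ ih
      _ = (t + 1) ^ 2 * 16 ^ (t + 1) := by ring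

theorem Nat.centralBinom_div_four_pow_le (t : ℕ) :
    (t.centralBinom : ℝ) / 4 ^ t ≤ (√(3 * t + 1))⁻¹ := by
  have h : ((t.centralBinom ^ 2 * (3 * t + 1) : ℕ) : ℝ) ≤ ((16 ^ t : ℕ) : ℝ) := by
    exact_mod_cast t.centralBinom_sq_mul_le
  push_cast at h
  rw [← Real.sqrt_inv, Real.le_sqrt (by positivity) (by positivity), div_pow,
    div_le_iff₀ (by positivity), inv_mul_eq_div, le_div_iff₀ (by positivity), ← pow_mul, pow_mul']
  norm_num
  exact h

namespace Polynomial

theorem coeff_C_mul_X_add_C_pow {R : Type*} [CommSemiring R] (p q : R) (m a : ℕ) :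
    ((C p * X + C q) ^ m).coeff a = m.choose a * p ^ a * q ^ (m - a) := by
  rw [add_pow, finsetSum_coeff]
  simp_rw [mul_pow, ← C_pow, mul_assoc, mul_comm (X ^ _), ← mul_assoc, ← C_mul, ← C_eq_natCast,
    ← C_mul, coeff_C_mul_X_pow]
  rw [sum_ite_eq]
  split_ifs with h
  · ring
  · rw [Nat.choose_eq_zero_of_lt (by simpa using h)]; simp

end Polynomial

theorem div_sq_add_sq_mul_inv_sqrt_le {c n K : ℝ} (hc : 0 < c) (hn : 0 < n) (hK : 1 ≤ K) :
    n / (c / 2 * n / K) ^ 2 + K ^ 2 * (√(3 * (c / 2 * n / K) + 1))⁻¹ ≤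
      4 / c ^ 2 * (K ^ 5 / n) + √(2 / c * (K ^ 5 / n)) := by
  have hK₀ : 0 < K := one_pos.trans_le hK
  gcongr ?_ + ?_
  · calc n / (c / 2 * n / K) ^ 2 = 4 / c ^ 2 * (K ^ 2 / n) := by field_simp; norm_num
      _ ≤ 4 / c ^ 2 * (K ^ 5 / n) := by
        have : K ^ 2 ≤ K ^ 5 := pow_le_pow_right₀ hK (by norm_num)
        gcongr
  · calc K ^ 2 * (√(3 * (c / 2 * n / K) + 1))⁻¹ ≤ K ^ 2 * (√(c / 2 * n / K))⁻¹ := by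
          gcongr
          linarith [show 0 < c / 2 * n / K by positivity]
      _ = √(2 / c * (K ^ 5 / n)) := by
        rw [← Real.sqrt_sq (by positivity : 0 ≤ K ^ 2), ← Real.sqrt_inv,
          ← Real.sqrt_mul (by positivity)]
        congr 1
        field_simp

theorem balanced_and_distinct_of_abs_sub_lt {α : Type*} {N : α → ℕ} {m : α → ℝ} {δ U : ℝ}
    (hm : ∀ a, 2 * δ ≤ m a ∧ m a + δ ≤ U) (hdev : ∀ a, |(N a : ℝ) - m a| < δ)
    (htie : ∀ a b, a ≠ b → N a = N b → (N a : ℝ) < δ) :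
    (∀ a, δ ≤ (N a : ℝ) ∧ (N a : ℝ) ≤ U) ∧ ∀ a b, a ≠ b → N a ≠ N b := by
  have hN : ∀ a, δ < N a ∧ (N a : ℝ) ≤ U := fun a => by
    have := abs_lt.1 (hdev a)
    constructor <;> linarith [hm a]
  exact ⟨fun a => ⟨(hN a).1.le, (hN a).2⟩,
    fun a b hab heq => (htie a b hab heq).not_ge (hN a).1.le⟩

section SplitLabel

variable {α : Type*} [DecidableEq α] {i j : α}

def splitLabel (i j b : α) (e : Bool) : α :=
  if b = i ∨ b = j then (if e then i else j) else b

theorem splitLabel_eq_left (hij : i ≠ j) {b : α} {e : Bool} :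
    splitLabel i j b e = i ↔ (b = i ∨ b = j) ∧ e := by
  unfold splitLabel; split_ifs <;> simp_all [eq_comm]

theorem splitLabel_eq_right (hij : i ≠ j) {b : α} {e : Bool} :
    splitLabel i j b e = j ↔ (b = i ∨ b = j) ∧ ¬e := by
  unfold splitLabel; split_ifs <;> simp_all [eq_comm]

end SplitLabel

section ProductLaw

variable {ι α β γ : Type*} [Fintype ι] [DecidableEq ι] [Fintype α] [Fintype β] [Fintype γ]
  {r : α → ℝ}

theorem sum_prod_mul_prod (r : α → ℝ) (φ : ι → α → ℝ) :
    ∑ f : ι → α, (∏ v, r (f v)) * ∏ v, φ v (f v) = ∏ v, ∑ a, r a * φ v a := by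
  simp only [Fintype.prod_sum, prod_mul_distrib]

theorem sum_prod_mul_apply (hr₁ : ∑ a, r a = 1) (u : ι) (φ : α → ℝ) :
    ∑ f : ι → α, (∏ v, r (f v)) * φ (f u) = ∑ a, r a * φ a := by
  simpa [hr₁] using sum_prod_mul_prod r fun v a => if v = u then φ a else 1

theorem sum_prod_mul_apply_mul_apply (hr₁ : ∑ a, r a = 1) {u u' : ι} (hu : u ≠ u')
    (φ ψ : α → ℝ) :
    ∑ f : ι → α, (∏ v, r (f v)) * (φ (f u) * ψ (f u')) = (∑ a, r a * φ a) * ∑ a, r a * ψ a := by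
  have := sum_prod_mul_prod r fun v a => if v = u then φ a else if v = u' then ψ a else 1
  simpa [prod_ite, filter_eq', hr₁, hu.symm] using this

theorem sum_prod_eq_one (hr : ∑ a, r a = 1) : ∑ f : ι → α, ∏ v, r (f v) = 1 := by
  simp [← Fintype.prod_sum, hr]

theorem sum_prod_mul_comp [DecidableEq α] (φ : β → α) (ρ : β → ℝ) (H : (ι → α) → ℝ) :
    ∑ g : ι → β, (∏ v, ρ (g v)) * H (φ ∘ g) =
      ∑ f : ι → α, (∏ v, ∑ b with φ b = f v, ρ b) * H f := by
  simp_rw [prod_univ_sum, sum_mul]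
  rw [← Finset.sum_fiberwise univ (fun g : ι → β => φ ∘ g)]
  refine sum_congr rfl fun f _ => sum_congr ?_ fun g hg => ?_
  · ext g; simp [funext_iff]
  · rw [show φ ∘ g = f from funext fun v => by simpa using Fintype.mem_piFinset.1 hg v]

theorem sum_prod_fst_mul_snd_mul (ρ : β → ℝ) (σ : γ → ℝ) (G : (ι → β × γ) → ℝ) :
    ∑ h : ι → β × γ, (∏ v, ρ (h v).1 * σ (h v).2) * G h =
      ∑ g : ι → β, (∏ v, ρ (g v)) * ∑ c : ι → γ, (∏ v, σ (c v)) * G fun v => (g v, c v) := by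
  rw [← (Equiv.arrowProdEquivProdArrow ι (fun _ => β) (fun _ => γ)).symm.sum_comp,
    Fintype.sum_prod_type]
  simp only [prod_mul_distrib, mul_sum, mul_assoc]
  rfl

open scoped Classical in
noncomputable def labelProb (r : α → ℝ) (E : (ι → α) → Prop) : ℝ :=
  ∑ f, if E f then ∏ v, r (f v) else 0

theorem labelProb_eq_sum_ite (r : α → ℝ) (E : (ι → α) → Prop) [DecidablePred E] :
    labelProb r E = ∑ f, if E f then ∏ v, r (f v) else 0 := by
  unfold labelProb; congr!

theorem labelProb_eq_sum_mul (r : α → ℝ) (E : (ι → α) → Prop) [DecidablePred E] :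
    labelProb r E = ∑ f, (∏ v, r (f v)) * if E f then 1 else 0 := by
  simp [labelProb_eq_sum_ite]

theorem labelProb_mono (hr : ∀ a, 0 ≤ r a) {E F : (ι → α) → Prop} (h : ∀ f, E f → F f) :
    labelProb r E ≤ labelProb r F := by
  classical
  rw [labelProb_eq_sum_ite, labelProb_eq_sum_ite]
  refine sum_le_sum fun f _ => ?_
  have := prod_nonneg fun v (_ : v ∈ univ) => hr (f v)
  split_ifs with hE hF hF <;> first | rfl | exact this | exact absurd (h f hE) hF

theorem labelProb_le_one (hr : ∀ a, 0 ≤ r a) (hr₁ : ∑ a, r a = 1) (E : (ι → α) → Prop) :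
    labelProb r E ≤ 1 :=
  (labelProb_mono (F := fun _ : ι → α => True) hr fun _ _ => trivial).trans_eq <| by
    simp [labelProb_eq_sum_ite, sum_prod_eq_one hr₁]

theorem labelProb_not (hr₁ : ∑ a, r a = 1) (E : (ι → α) → Prop) :
    labelProb r (fun f => ¬E f) = 1 - labelProb r E := by
  classical
  rw [labelProb_eq_sum_ite, labelProb_eq_sum_ite, eq_sub_iff_add_eq, ← sum_add_distrib,
    ← sum_prod_eq_one (ι := ι) hr₁]
  refine sum_congr rfl fun f _ => ?_
  split_ifs <;> simp

theorem labelProb_or_le (hr : ∀ a, 0 ≤ r a) (E F : (ι → α) → Prop) :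
    labelProb r (fun f => E f ∨ F f) ≤ labelProb r E + labelProb r F := by
  classical
  rw [labelProb_eq_sum_ite, labelProb_eq_sum_ite, labelProb_eq_sum_ite, ← sum_add_distrib]
  refine sum_le_sum fun f _ => ?_
  have := prod_nonneg fun v (_ : v ∈ univ) => hr (f v)
  split_ifs <;> simp_all

theorem labelProb_exists_le {κ : Type*} (hr : ∀ a, 0 ≤ r a) (s : Finset κ)
    (E : κ → (ι → α) → Prop) :
    labelProb r (fun f => ∃ x ∈ s, E x f) ≤ ∑ x ∈ s, labelProb r (E x) := by
  classical
  simp only [labelProb_eq_sum_ite]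
  rw [sum_comm]
  refine sum_le_sum fun f _ => ?_
  have hw := prod_nonneg fun v (_ : v ∈ univ) => hr (f v)
  split_ifs with h
  · obtain ⟨x, hx, hEx⟩ := h
    calc ∏ v, r (f v) = if E x f then ∏ v, r (f v) else 0 := (if_pos hEx).symm
      _ ≤ _ := single_le_sum (f := fun x => if E x f then ∏ v, r (f v) else 0)
          (fun _ _ => by split_ifs <;> simp [hw]) hx
  · exact sum_nonneg fun _ _ => by split_ifs <;> simp [hw]

theorem labelProb_le_sum_mul (hr : ∀ a, 0 ≤ r a) {E : (ι → α) → Prop} (X : (ι → α) → ℝ)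
    (hX : ∀ f, 0 ≤ X f) (hEX : ∀ f, E f → 1 ≤ X f) :
    labelProb r E ≤ ∑ f, (∏ v, r (f v)) * X f := by
  classical
  rw [labelProb_eq_sum_mul]
  refine sum_le_sum fun f _ => mul_le_mul_of_nonneg_left ?_ (prod_nonneg fun v _ => hr (f v))
  split_ifs with h
  exacts [hEX f h, hX f]

section Counts

variable [DecidableEq α] {i j : α}

theorem sum_prod_mul_card_sub_sq (hr₁ : ∑ a, r a = 1) (i : α) :
    ∑ f : ι → α, (∏ v, r (f v)) * ((#{v | f v = i} : ℝ) - Fintype.card ι * r i) ^ 2 =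
      Fintype.card ι * r i * (1 - r i) := by
  set Y : α → ℝ := fun a => (if a = i then 1 else 0) - r i
  have hY : ∀ f : ι → α, (#{v | f v = i} : ℝ) - Fintype.card ι * r i = ∑ u, Y (f u) := by
    intro f
    rw [natCast_card_filter]
    simp [Y, sum_sub_distrib]
  have hmean : ∑ a, r a * Y a = 0 := by simp [Y, mul_sub, ← sum_mul, hr₁]
  have hvar : ∑ a, r a * (Y a * Y a) = r i * (1 - r i) := by
    have h : ∀ a, r a * (Y a * Y a) =
        (if a = i then r i * (1 - 2 * r i) else 0) + r a * r i ^ 2 := by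
      intro a; simp only [Y]; split_ifs with h <;> [subst h; skip] <;> ring
    simp only [h, sum_add_distrib, ← sum_mul, hr₁, sum_ite_eq', mem_univ, if_true]
    ring
  have hcov : ∀ u u' : ι, ∑ f : ι → α, (∏ v, r (f v)) * (Y (f u) * Y (f u')) =
      if u = u' then r i * (1 - r i) else 0 := by
    intro u u'
    split_ifs with h
    · subst h; rw [sum_prod_mul_apply hr₁ u fun a => Y a * Y a, hvar]
    · rw [sum_prod_mul_apply_mul_apply hr₁ h, hmean, zero_mul]
  simp_rw [hY, sq, sum_mul_sum, mul_sum]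
  rw [sum_comm]
  simp_rw [sum_comm (s := (univ : Finset (ι → α))), hcov]
  simp [sum_ite_eq, mul_assoc]

theorem labelProb_abs_card_sub_ge_le (hr : ∀ a, 0 ≤ r a) (hr₁ : ∑ a, r a = 1)
    (i : α) {δ : ℝ} (hδ : 0 < δ) :
    labelProb r (fun f : ι → α => δ ≤ |(#{v | f v = i} : ℝ) - Fintype.card ι * r i|) ≤
      Fintype.card ι * r i * (1 - r i) / δ ^ 2 := by
  rw [← sum_prod_mul_card_sub_sq hr₁, sum_div]
  simp_rw [mul_div_assoc]
  refine labelProb_le_sum_mul hr _ (fun f => by positivity) fun f hf => ?_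
  rw [one_le_div (by positivity)]
  exact (pow_le_pow_left₀ hδ.le hf 2).trans_eq (sq_abs _)

theorem labelProb_card_filter_eq_choose_mul (q : Bool → ℝ) (M : Finset ι) (a : ℕ) :
    labelProb q (fun c => #{v ∈ M | c v} = a) =
      (#M).choose a * q true ^ a * q false ^ (#M - a) *
        (q true + q false) ^ (Fintype.card ι - #M) := by
  open Polynomial in
  -- the generating polynomial of the count factorises over the vertices
  have hgen : ∑ c : ι → Bool, C (∏ v, q (c v)) * X ^ #{v ∈ M | c v} =
      (C (q true) * X + C (q false)) ^ #M * C (q true + q false) ^ (Fintype.card ι - #M) := by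
    have hfac : ∀ v, ∑ e : Bool, C (q e) * X ^ (if v ∈ M ∧ e then 1 else 0) =
        if v ∈ M then C (q true) * X + C (q false) else C (q true + q false) := by
      intro v; split_ifs with h <;> simp [h, add_comm]
    have hcard : ∀ c : ι → Bool, #{v ∈ M | c v} = ∑ v, if v ∈ M ∧ c v then 1 else 0 := by
      intro c; rw [sum_boole]; congr 1; ext; simp
    calc ∑ c : ι → Bool, C (∏ v, q (c v)) * X ^ #{v ∈ M | c v}
        = ∏ v, ∑ e : Bool, C (q e) * X ^ (if v ∈ M ∧ e then 1 else 0) := by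
          simp_rw [Fintype.prod_sum, prod_mul_distrib, ← map_prod, prod_pow_eq_pow_sum, hcard]
      _ = ∏ v, if v ∈ M then C (q true) * X + C (q false) else C (q true + q false) :=
          prod_congr rfl fun v _ => hfac v
      _ = _ := by
          rw [prod_ite, prod_const, prod_const, ← card_compl]
          congr 3 <;> ext <;> simp
  have := congrArg (fun P : Polynomial ℝ => P.coeff a) hgen
  simp only [Polynomial.finsetSum_coeff, Polynomial.coeff_C_mul_X_pow, ← Polynomial.C_pow,
    Polynomial.coeff_mul_C, Polynomial.coeff_C_mul_X_add_C_pow] at this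
  rw [← this, labelProb_eq_sum_ite]
  simp_rw [eq_comm (a := a)]

theorem labelProb_card_filter_eq_card_filter_not_le {q : Bool → ℝ} (hq : ∀ e, 0 ≤ q e)
    (hq₁ : q true + q false = 1) (M : Finset ι) {τ : ℝ} (hτ : 0 ≤ τ) :
    labelProb q (fun c => #{v ∈ M | c v} = #{v ∈ M | ¬c v} ∧ τ ≤ #{v ∈ M | c v}) ≤
      (√(3 * τ + 1))⁻¹ := by
  have hsplit : ∀ c : ι → Bool, #{v ∈ M | c v} + #{v ∈ M | ¬c v} = #M := fun c =>
    card_filter_add_card_filter_not _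
  by_cases hM : ∃ t : ℕ, #M = 2 * t ∧ τ ≤ t
  · obtain ⟨t, hMt, hτt⟩ := hM
    have hevent : ∀ c : ι → Bool,
        (#{v ∈ M | c v} = #{v ∈ M | ¬c v} ∧ τ ≤ #{v ∈ M | c v}) ↔ #{v ∈ M | c v} = t := by
      intro c
      constructor
      · rintro ⟨h, -⟩; have := hsplit c; omega
      · intro h; have := hsplit c; exact ⟨by omega, h ▸ hτt⟩
    have hamgm : q true * q false ≤ 1 / 4 := by nlinarith [sq_nonneg (q true - q false)]
    calc labelProb q (fun c => #{v ∈ M | c v} = #{v ∈ M | ¬c v} ∧ τ ≤ #{v ∈ M | c v})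
        = t.centralBinom * (q true * q false) ^ t := by
          simp_rw [hevent, labelProb_card_filter_eq_choose_mul, hMt, hq₁, one_pow, mul_one, mul_pow,
            Nat.centralBinom_eq_two_mul_choose, show 2 * t - t = t by omega, mul_assoc]
      _ ≤ t.centralBinom * (1 / 4) ^ t := by gcongr; exact mul_nonneg (hq _) (hq _)
      _ = t.centralBinom / 4 ^ t := by rw [one_div_pow, mul_one_div]
      _ ≤ (√(3 * t + 1))⁻¹ := Nat.centralBinom_div_four_pow_le t
      _ ≤ (√(3 * τ + 1))⁻¹ := by gcongr
  · have : labelProb q (fun c => #{v ∈ M | c v} = #{v ∈ M | ¬c v} ∧ τ ≤ #{v ∈ M | c v}) = 0 := by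
      rw [labelProb_eq_sum_ite]
      refine sum_eq_zero fun c _ => if_neg ?_
      rintro ⟨h, hτc⟩
      exact hM ⟨_, by have := hsplit c; omega, hτc⟩
    rw [this]
    positivity

theorem sum_filter_splitLabel_eq (hij : i ≠ j) (hr : r i + r j ≠ 0) (a : α) :
    ∑ x : α × Bool with splitLabel i j x.1 x.2 = a,
      r x.1 * ((if x.2 then r i else r j) / (r i + r j)) = r a := by
  have fiber : ({x | splitLabel i j x.1 x.2 = a} : Finset (α × Bool)) =
      if a = i then {(i, true), (j, true)} else if a = j then {(i, false), (j, false)}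
      else {(a, true), (a, false)} := by
    ext ⟨b, e⟩
    split_ifs with hi hj <;> subst_vars <;> cases e <;> simp [splitLabel] <;> grind
  rw [fiber]
  split_ifs with hi hj <;> subst_vars <;> rw [sum_pair (by simp [hij])] <;> simp <;> field_simp

theorem sum_prod_mul_eq_sum_splitLabel (hij : i ≠ j) (hr : r i + r j ≠ 0) (H : (ι → α) → ℝ) :
    ∑ f : ι → α, (∏ v, r (f v)) * H f =
      ∑ g : ι → α, (∏ v, r (g v)) * ∑ c : ι → Bool,
        (∏ v, (if c v then r i else r j) / (r i + r j)) *
          H fun v => splitLabel i j (g v) (c v) := by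
  have := sum_prod_mul_comp (fun x : α × Bool => splitLabel i j x.1 x.2)
    (fun x => r x.1 * ((if x.2 then r i else r j) / (r i + r j))) H
  simp only [sum_filter_splitLabel_eq hij hr] at this
  rw [← this]
  exact sum_prod_fst_mul_snd_mul r (fun e : Bool => (if e then r i else r j) / (r i + r j)) _

theorem labelProb_card_eq_card_le (hr : ∀ a, 0 ≤ r a) (hr₁ : ∑ a, r a = 1) (hij : i ≠ j)
    (hrij : 0 < r i + r j) {τ : ℝ} (hτ : 0 ≤ τ) :
    labelProb r (fun f : ι → α => #{v | f v = i} = #{v | f v = j} ∧ τ ≤ #{v | f v = i}) ≤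
      (√(3 * τ + 1))⁻¹ := by
  set q : Bool → ℝ := fun e => (if e then r i else r j) / (r i + r j)
  have hq : ∀ e, 0 ≤ q e := fun e => by
    simp only [q]; split_ifs <;> exact div_nonneg (hr _) hrij.le
  have hq₁ : q true + q false = 1 := by simp [q]; field_simp
  have hcoin : ∀ g : ι → α,
      ∑ c : ι → Bool, (∏ v, q (c v)) * (if #{v | splitLabel i j (g v) (c v) = i} =
          #{v | splitLabel i j (g v) (c v) = j} ∧ τ ≤ #{v | splitLabel i j (g v) (c v) = i}
        then 1 else 0) ≤ (√(3 * τ + 1))⁻¹ := by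
    intro g
    set M : Finset ι := {v | g v = i ∨ g v = j}
    have hi : ∀ c : ι → Bool, #{v | splitLabel i j (g v) (c v) = i} = #{v ∈ M | c v} := by
      intro c; congr 1; ext v; simp [M, splitLabel_eq_left hij]
    have hj : ∀ c : ι → Bool, #{v | splitLabel i j (g v) (c v) = j} = #{v ∈ M | ¬c v} := by
      intro c; congr 1; ext v; simp [M, splitLabel_eq_right hij]
    simp_rw [hi, hj, ← labelProb_eq_sum_mul]
    exact labelProb_card_filter_eq_card_filter_not_le hq hq₁ M hτ
  calc labelProb r (fun f : ι → α => #{v | f v = i} = #{v | f v = j} ∧ τ ≤ #{v | f v = i})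
      = ∑ g : ι → α, (∏ v, r (g v)) * ∑ c : ι → Bool, (∏ v, q (c v)) *
          (if #{v | splitLabel i j (g v) (c v) = i} = #{v | splitLabel i j (g v) (c v) = j} ∧
            τ ≤ #{v | splitLabel i j (g v) (c v) = i} then 1 else 0) := by
        rw [labelProb_eq_sum_mul, sum_prod_mul_eq_sum_splitLabel hij hrij.ne']
    _ ≤ ∑ g : ι → α, (∏ v, r (g v)) * (√(3 * τ + 1))⁻¹ :=
        sum_le_sum fun g _ => mul_le_mul_of_nonneg_left (hcoin g) (prod_nonneg fun v _ => hr _)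
    _ = (√(3 * τ + 1))⁻¹ := by rw [← sum_mul, sum_prod_eq_one hr₁, one_mul]

theorem sum_labelProb_abs_card_sub_ge_le (hr : ∀ a, 0 ≤ r a) (hr₁ : ∑ a, r a = 1) {δ : ℝ}
    (hδ : 0 < δ) :
    ∑ a, labelProb r (fun f : ι → α => δ ≤ |(#{v | f v = a} : ℝ) - Fintype.card ι * r a|) ≤
      Fintype.card ι / δ ^ 2 := calc
  _ ≤ ∑ a, Fintype.card ι * r a * (1 - r a) / δ ^ 2 :=
      sum_le_sum fun a _ => labelProb_abs_card_sub_ge_le hr hr₁ a hδ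
  _ ≤ ∑ a, Fintype.card ι * r a / δ ^ 2 := by
      refine sum_le_sum fun a _ => div_le_div_of_nonneg_right ?_ (by positivity)
      have := mul_nonneg (Nat.cast_nonneg (Fintype.card ι) : (0 : ℝ) ≤ _) (hr a)
      nlinarith [mul_nonneg this (hr a)]
  _ = Fintype.card ι / δ ^ 2 := by rw [← sum_div, ← mul_sum, hr₁, mul_one]

theorem sum_labelProb_card_eq_card_le (hr : ∀ a, 0 < r a) (hr₁ : ∑ a, r a = 1) {τ : ℝ}
    (hτ : 0 ≤ τ) :
    ∑ p ∈ (univ : Finset α).offDiag, labelProb r (fun f : ι → α =>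
        #{v | f v = p.1} = #{v | f v = p.2} ∧ τ ≤ #{v | f v = p.1}) ≤
      (Fintype.card α : ℝ) ^ 2 * (√(3 * τ + 1))⁻¹ := calc
  _ ≤ ∑ _p ∈ (univ : Finset α).offDiag, (√(3 * τ + 1))⁻¹ :=
      sum_le_sum fun p hp => labelProb_card_eq_card_le (fun a => (hr a).le) hr₁
        (mem_offDiag.1 hp).2.2 (add_pos (hr _) (hr _)) hτ
  _ ≤ (Fintype.card α : ℝ) ^ 2 * (√(3 * τ + 1))⁻¹ := by
      have : Fintype.card α * Fintype.card α - Fintype.card α ≤ Fintype.card α ^ 2 :=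
        (Nat.sub_le _ _).trans_eq (sq _).symm
      rw [sum_const, nsmul_eq_mul, offDiag_card, card_univ]
      gcongr
      exact_mod_cast this

theorem labelProb_deviation_or_tie_le (hr : ∀ a, 0 < r a) (hr₁ : ∑ a, r a = 1) {δ : ℝ}
    (hδ : 0 < δ) :
    labelProb r (fun f : ι → α =>
        (∃ a, δ ≤ |(#{v | f v = a} : ℝ) - Fintype.card ι * r a|) ∨
          ∃ a b, a ≠ b ∧ #{v | f v = a} = #{v | f v = b} ∧ δ ≤ #{v | f v = a}) ≤
      Fintype.card ι / δ ^ 2 + (Fintype.card α : ℝ) ^ 2 * (√(3 * δ + 1))⁻¹ := by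
  have hr' : ∀ a, 0 ≤ r a := fun a => (hr a).le
  refine (labelProb_mono hr' ?_).trans <| (labelProb_or_le hr' _ _).trans <| add_le_add
    ((labelProb_exists_le hr' univ _).trans (sum_labelProb_abs_card_sub_ge_le hr' hr₁ hδ))
    ((labelProb_exists_le hr' univ.offDiag _).trans (sum_labelProb_card_eq_card_le hr hr₁ hδ.le))
  rintro f (⟨a, ha⟩ | ⟨a, b, hab, h⟩)
  · exact Or.inl ⟨a, mem_univ _, ha⟩
  · exact Or.inr ⟨(a, b), by simpa using hab, h⟩

theorem one_sub_le_labelProb_balanced_and_distinct [Nonempty ι] {c₁ c₂ : ℝ} (hc₁ : 0 < c₁)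
    (hr₁ : ∑ a, r a = 1) (hrb : ∀ a, c₁ / Fintype.card α ≤ r a ∧ r a ≤ c₂ / Fintype.card α) :
    1 - (4 / c₁ ^ 2 * ((Fintype.card α : ℝ) ^ 5 / Fintype.card ι) +
        √(2 / c₁ * ((Fintype.card α : ℝ) ^ 5 / Fintype.card ι))) ≤
      labelProb r fun f : ι → α =>
        (∀ a, c₁ / 2 * Fintype.card ι / Fintype.card α ≤ (#{v | f v = a} : ℝ) ∧
          (#{v | f v = a} : ℝ) ≤ (c₂ + c₁ / 2) * Fintype.card ι / Fintype.card α) ∧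
        ∀ a b, a ≠ b → #{v | f v = a} ≠ #{v | f v = b} := by
  have : Nonempty α := by
    by_contra! h
    simp at hr₁
  set n : ℝ := (Fintype.card ι : ℝ)
  set K : ℝ := (Fintype.card α : ℝ)
  have hn : 0 < n := by simp [n, Fintype.card_pos]
  have hK : 1 ≤ K := by simp [K, Nat.one_le_iff_ne_zero, Fintype.card_ne_zero]
  have hr : ∀ a, 0 < r a := fun a => (div_pos hc₁ (by positivity)).trans_le (hrb a).1
  set δ := c₁ / 2 * n / K with hδ_def
  have hδ : 0 < δ := by positivity
  have hmean : ∀ a, 2 * δ ≤ n * r a ∧ n * r a + δ ≤ (c₂ + c₁ / 2) * n / K := fun a => by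
    constructor
    · calc 2 * δ = n * (c₁ / K) := by rw [hδ_def]; field_simp
        _ ≤ n * r a := mul_le_mul_of_nonneg_left (hrb a).1 hn.le
    · calc n * r a + δ ≤ n * (c₂ / K) + δ := by gcongr; exact (hrb a).2
        _ = (c₂ + c₁ / 2) * n / K := by rw [hδ_def]; field_simp
  calc 1 - (4 / c₁ ^ 2 * (K ^ 5 / n) + √(2 / c₁ * (K ^ 5 / n)))
      ≤ 1 - labelProb r (fun f : ι → α =>
          (∃ a, δ ≤ |(#{v | f v = a} : ℝ) - n * r a|) ∨
            ∃ a b, a ≠ b ∧ #{v | f v = a} = #{v | f v = b} ∧ δ ≤ #{v | f v = a}) := by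
        gcongr
        exact (labelProb_deviation_or_tie_le hr hr₁ hδ).trans (div_sq_add_sq_mul_inv_sqrt_le hc₁ hn hK)
    _ = labelProb r (fun f : ι → α => ¬((∃ a, δ ≤ |(#{v | f v = a} : ℝ) - n * r a|) ∨
          ∃ a b, a ≠ b ∧ #{v | f v = a} = #{v | f v = b} ∧ δ ≤ #{v | f v = a})) :=
        (labelProb_not hr₁ _).symm
    _ ≤ _ := by
        refine labelProb_mono (fun a => (hr a).le) fun f hf => ?_
        push Not at hf
        exact balanced_and_distinct_of_abs_sub_lt hmean hf.1 hf.2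

end Counts

end ProductLaw

open scoped Classical in
theorem balanced_and_distinct_community_sizes_general
    (k : ℕ → ℕ)
    (r : (n : ℕ) → Fin (k n) → ℝ)
    (hr_sum : ∀ n, ∑ i, r n i = 1)
    (hr_theta : ∃ c₁ c₂ : ℝ, 0 < c₁ ∧ 0 < c₂ ∧
      ∀ n, ∀ i : Fin (k n), c₁ / (k n : ℝ) ≤ r n i ∧ r n i ≤ c₂ / (k n : ℝ))
    (hk_small : Tendsto (fun n => (k n : ℝ) / (n : ℝ) ^ ((1 : ℝ) / 5)) atTop (nhds 0)) :
    ∃ c C : ℝ, 0 < c ∧ 0 < C ∧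
      Tendsto
        (fun n =>
          ∑ f : Fin n → Fin (k n),
            (if ((∀ i : Fin (k n),
                    c * (n : ℝ) / (k n : ℝ) ≤ ((univ.filter fun v => f v = i).card : ℝ) ∧
                    ((univ.filter fun v => f v = i).card : ℝ) ≤ C * (n : ℝ) / (k n : ℝ)) ∧
                  ∀ i j : Fin (k n), i ≠ j →
                    (univ.filter fun v => f v = i).card ≠ (univ.filter fun v => f v = j).card)
              then ∏ v : Fin n, r n (f v) else 0))
        atTop (nhds 1) := by
  obtain ⟨c₁, c₂, hc₁, hc₂, hrb⟩ := hr_theta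
  refine ⟨c₁ / 2, c₂ + c₁ / 2, by positivity, by positivity, ?_⟩
  have hx : Tendsto (fun n : ℕ => (k n : ℝ) ^ 5 / n) atTop (nhds 0) := by
    have h5 := hk_small.pow 5
    rw [zero_pow (by norm_num)] at h5
    refine h5.congr fun n => ?_
    rw [div_pow, ← Real.rpow_natCast ((n : ℝ) ^ _) 5, ← Real.rpow_mul (Nat.cast_nonneg _)]
    norm_num
  have hlow : Tendsto (fun n : ℕ =>
      1 - (4 / c₁ ^ 2 * ((k n : ℝ) ^ 5 / n) + √(2 / c₁ * ((k n : ℝ) ^ 5 / n))))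
      atTop (nhds 1) := by
    simpa using tendsto_const_nhds.sub ((hx.const_mul _).add (hx.const_mul _).sqrt)
  refine tendsto_of_tendsto_of_tendsto_of_le_of_le' hlow tendsto_const_nhds ?_
    (Eventually.of_forall fun n => ?_)
  · filter_upwards [eventually_gt_atTop 0] with n hn
    have : Nonempty (Fin n) := ⟨⟨0, hn⟩⟩
    have := one_sub_le_labelProb_balanced_and_distinct (ι := Fin n) hc₁ (hr_sum n)
      (by simpa using hrb n)
    simp only [Fintype.card_fin] at this
    rwa [labelProb_eq_sum_ite] at this
  · rw [← labelProb_eq_sum_ite]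
    exact labelProb_le_one (fun i => (div_nonneg hc₁.le (Nat.cast_nonneg _)).trans (hrb n i).1)
      (hr_sum n) _

open scoped Classical in
/-- If `n` vertices independently receive one of `k` community labels, label `i` with
probability `rᵢ`, `∑ rᵢ = 1`, each `rᵢ = Θ(1/k)`, and `k = o(n^{1/5})`, then with probability
tending to `1` as `n → ∞`, every community size is `Θ(n/k)` and all `k` community sizes are
pairwise distinct. -/
theorem balanced_and_distinct_community_sizes
    (k : ℕ → ℕ) (hk : ∀ n, 0 < k n)
    (r : (n : ℕ) → Fin (k n) → ℝ)
    (hr_sum : ∀ n, ∑ i, r n i = 1)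
    (hr_theta : ∃ c₁ c₂ : ℝ, 0 < c₁ ∧ 0 < c₂ ∧
      ∀ n, ∀ i : Fin (k n), c₁ / (k n : ℝ) ≤ r n i ∧ r n i ≤ c₂ / (k n : ℝ))
    (hk_small : Tendsto (fun n => (k n : ℝ) / (n : ℝ) ^ ((1 : ℝ) / 5)) atTop (nhds 0)) :
    ∃ c C : ℝ, 0 < c ∧ 0 < C ∧
      Tendsto
        (fun n =>
          ∑ f : Fin n → Fin (k n),
            (if ((∀ i : Fin (k n),
                    c * (n : ℝ) / (k n : ℝ) ≤ ((univ.filter fun v => f v = i).card : ℝ) ∧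
                    ((univ.filter fun v => f v = i).card : ℝ) ≤ C * (n : ℝ) / (k n : ℝ)) ∧
                  ∀ i j : Fin (k n), i ≠ j →
                    (univ.filter fun v => f v = i).card ≠ (univ.filter fun v => f v = j).card)
              then ∏ v : Fin n, r n (f v) else 0))
        atTop (nhds 1) :=
  balanced_and_distinct_community_sizes_general k r hr_sum hr_theta hk_small
end

section
/- Fix k ∈ ℕ₊, p ∈ (0,1), α ∈ [0, 1-p]. Let Γ₀ ~ G(k, p/(1-α)) and let Γ, Γ' be obtained by independently retaining each edge of Γ₀ with probability 1-α. Fix subsets J, J' ⊆ [k] and a vertex i ∉ J ∪ J'. Then for any t > 0, with probability at least 1 - 6e^{-t} - 2·exp(-p|J∩J'|/(3(1-α))): | |N_Γ(i;J)| - p|J| - |N_{Γ'}(i;J')| + p|J'| | ≤ 4(t + √(tαp|J∩J'|) + √(tp|J△J'|)). -/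
open Finset

/-- Per-edge weight of the correlated Erdős–Rényi sample space: parent edge present with
probability `p/(1-α)`, and two independent retention flags each with probability `1-α`. -/
noncomputable def tripleWeight (p α : ℝ) (b : Bool × Bool × Bool) : ℝ :=
  (if b.1 then p / (1 - α) else 1 - p / (1 - α)) *
    (if b.2.1 then 1 - α else α) * (if b.2.2 then 1 - α else α)

/-- The first subsampled graph `Γ` from configuration `ω`. -/
def corrGraph1 (k : ℕ) (ω : Sym2 (Fin k) → Bool × Bool × Bool) : SimpleGraph (Fin k) :=
  SimpleGraph.fromRel (fun u v => (ω s(u, v)).1 = true ∧ (ω s(u, v)).2.1 = true)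

/-- The second subsampled graph `Γ'` from configuration `ω`. -/
def corrGraph2 (k : ℕ) (ω : Sym2 (Fin k) → Bool × Bool × Bool) : SimpleGraph (Fin k) :=
  SimpleGraph.fromRel (fun u v => (ω s(u, v)).1 = true ∧ (ω s(u, v)).2.2 = true)

/-! ### Auxiliary lemmas -/

lemma cnc_exp_quad {x : ℝ} (hx : |x| ≤ 1) : Real.exp x ≤ 1 + x + x ^ 2 := by
  have h := Real.exp_bound hx (n := 2) (by norm_num)
  have h2 : ∑ m ∈ range 2, x ^ m / (Nat.factorial m : ℝ) = 1 + x := by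
    simp [Finset.sum_range_succ, Nat.factorial]
  rw [h2] at h
  norm_num [Nat.factorial] at h
  have := abs_le.mp h
  nlinarith [sq_abs x, sq_nonneg x]

lemma cnc_sqrt_add_le (x y : ℝ) (hx : 0 ≤ x) (hy : 0 ≤ y) :
    Real.sqrt (x + y) ≤ Real.sqrt x + Real.sqrt y := by
  have h1 := Real.sq_sqrt hx
  have h2 := Real.sq_sqrt hy
  have h3 := Real.sq_sqrt (add_nonneg hx hy)
  nlinarith [Real.sqrt_nonneg x, Real.sqrt_nonneg y, Real.sqrt_nonneg (x + y),
    mul_nonneg (Real.sqrt_nonneg x) (Real.sqrt_nonneg y)]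

lemma cnc_bern_le {p μ : ℝ} (hp : 0 ≤ p) (hμ : |μ| ≤ 1) :
    Real.exp (-(μ * p)) * (1 + p * (Real.exp μ - 1)) ≤ Real.exp (p * μ ^ 2) := by
  have h1 : 1 + p * (Real.exp μ - 1) ≤ Real.exp (p * (Real.exp μ - 1)) := by
    have := Real.add_one_le_exp (p * (Real.exp μ - 1)); linarith
  have h2 : Real.exp (-(μ * p)) * (1 + p * (Real.exp μ - 1)) ≤
      Real.exp (-(μ * p)) * Real.exp (p * (Real.exp μ - 1)) :=
    mul_le_mul_of_nonneg_left h1 (Real.exp_nonneg _)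
  rw [← Real.exp_add] at h2
  refine h2.trans (Real.exp_le_exp.mpr ?_)
  have h3 : Real.exp μ ≤ 1 + μ + μ ^ 2 := cnc_exp_quad hμ
  nlinarith

lemma cnc_pair_le {p α μ : ℝ} (hp : 0 ≤ p) (hα : 0 ≤ α) (hμ : |μ| ≤ 1) :
    1 + p * α * (Real.exp μ + Real.exp (-μ) - 2) ≤ Real.exp (2 * α * p * μ ^ 2) := by
  have h3 : Real.exp μ ≤ 1 + μ + μ ^ 2 := cnc_exp_quad hμ
  have h4 : Real.exp (-μ) ≤ 1 + -μ + (-μ) ^ 2 := cnc_exp_quad (by rwa [abs_neg])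
  have h5 := Real.add_one_le_exp (2 * α * p * μ ^ 2)
  nlinarith [mul_nonneg hp hα]

section
variable {p α : ℝ}

lemma cnc_weight_nonneg (hp0 : 0 < p) (hp1 : p < 1) (hα0 : 0 ≤ α) (hα1 : α ≤ 1 - p)
    (b : Bool × Bool × Bool) : 0 ≤ tripleWeight p α b := by
  have h1 : 0 < 1 - α := by linarith
  have hq0 : 0 ≤ p / (1 - α) := by positivity
  have hq1 : p / (1 - α) ≤ 1 := by rw [div_le_one h1]; linarith
  unfold tripleWeight
  obtain ⟨b1, b2, b3⟩ := b
  cases b1 <;> cases b2 <;> cases b3 <;> simp <;>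
    exact mul_nonneg (mul_nonneg (by linarith) (by linarith)) (by linarith)

lemma cnc_weight_sum_one (hp0 : 0 < p) (hα1 : α ≤ 1 - p) :
    ∑ b : Bool × Bool × Bool, tripleWeight p α b = 1 := by
  have h1 : (1 : ℝ) - α ≠ 0 := by intro h; nlinarith
  simp [tripleWeight, Fintype.sum_prod_type]
  field_simp
  ring

lemma cnc_mgf_single₁ (hp0 : 0 < p) (hα1 : α ≤ 1 - p) (μ : ℝ) :
    (∑ b : Bool × Bool × Bool, tripleWeight p α b *
      Real.exp (μ * ((if b.1 = true ∧ b.2.1 = true then (1:ℝ) else 0) - p)))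
    = Real.exp (-(μ * p)) * (1 + p * (Real.exp μ - 1)) := by
  have h1 : (1:ℝ) - α ≠ 0 := by intro h; nlinarith
  have e1 : Real.exp (μ * (1 - p)) = Real.exp μ * Real.exp (-(μ * p)) := by
    rw [← Real.exp_add]; congr 1; ring
  simp only [tripleWeight, Fintype.sum_prod_type, Fintype.sum_bool]
  simp [e1]
  field_simp
  ring

lemma cnc_mgf_single₂ (hp0 : 0 < p) (hα1 : α ≤ 1 - p) (μ : ℝ) :
    (∑ b : Bool × Bool × Bool, tripleWeight p α b *
      Real.exp (μ * ((if b.1 = true ∧ b.2.2 = true then (1:ℝ) else 0) - p)))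
    = Real.exp (-(μ * p)) * (1 + p * (Real.exp μ - 1)) := by
  have h1 : (1:ℝ) - α ≠ 0 := by intro h; nlinarith
  have e1 : Real.exp (μ * (1 - p)) = Real.exp μ * Real.exp (-(μ * p)) := by
    rw [← Real.exp_add]; congr 1; ring
  simp only [tripleWeight, Fintype.sum_prod_type, Fintype.sum_bool]
  simp [e1]
  field_simp
  ring

lemma cnc_mgf_pair (hp0 : 0 < p) (hα1 : α ≤ 1 - p) (μ : ℝ) :
    (∑ b : Bool × Bool × Bool, tripleWeight p α b *
      Real.exp (μ * ((if b.1 = true ∧ b.2.1 = true then (1:ℝ) else 0) -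
        (if b.1 = true ∧ b.2.2 = true then (1:ℝ) else 0))))
    = 1 + p * α * (Real.exp μ + Real.exp (-μ) - 2) := by
  have h1 : (1:ℝ) - α ≠ 0 := by intro h; nlinarith
  simp [tripleWeight, Fintype.sum_prod_type]
  field_simp
  ring

end

lemma cnc_chernoff {k : ℕ} (w : Bool × Bool × Bool → ℝ) (hw : ∀ b, 0 ≤ w b)
    (g : Sym2 (Fin k) → (Bool × Bool × Bool) → ℝ) (lam a : ℝ) (hlam : 0 ≤ lam)
    (V' : Sym2 (Fin k) → ℝ)
    (hM : ∀ e, ∑ b, w b * Real.exp (lam * g e b) ≤ Real.exp (V' e)) :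
    ∑ ω : Sym2 (Fin k) → Bool × Bool × Bool,
      (if a < ∑ e, g e (ω e) then ∏ e, w (ω e) else 0)
      ≤ Real.exp ((∑ e, V' e) - lam * a) := by
  classical
  have key : ∀ ω : Sym2 (Fin k) → Bool × Bool × Bool,
      (if a < ∑ e, g e (ω e) then ∏ e, w (ω e) else 0) ≤
        Real.exp (-(lam * a)) * ∏ e, (w (ω e) * Real.exp (lam * g e (ω e))) := by
    intro ω
    have hprod : (0:ℝ) ≤ ∏ e, w (ω e) := Finset.prod_nonneg fun e _ => hw _
    have hre : ∏ e, (w (ω e) * Real.exp (lam * g e (ω e))) =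
        (∏ e, w (ω e)) * Real.exp (lam * ∑ e, g e (ω e)) := by
      rw [Finset.prod_mul_distrib, Finset.mul_sum, Real.exp_sum]
    rw [hre, ← mul_assoc, mul_comm (Real.exp (-(lam * a))), mul_assoc, ← Real.exp_add]
    split_ifs with h
    · have : (1:ℝ) ≤ Real.exp (-(lam * a) + lam * ∑ e, g e (ω e)) := by
        rw [Real.one_le_exp_iff]
        nlinarith [h, hlam]
      nlinarith [this, hprod]
    · positivity
  calc ∑ ω : Sym2 (Fin k) → Bool × Bool × Bool,
        (if a < ∑ e, g e (ω e) then ∏ e, w (ω e) else 0)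
      ≤ ∑ ω : Sym2 (Fin k) → Bool × Bool × Bool,
        Real.exp (-(lam * a)) * ∏ e, (w (ω e) * Real.exp (lam * g e (ω e))) :=
        Finset.sum_le_sum fun ω _ => key ω
    _ = Real.exp (-(lam * a)) * ∑ ω : Sym2 (Fin k) → Bool × Bool × Bool,
          ∏ e, (w (ω e) * Real.exp (lam * g e (ω e))) := by rw [Finset.mul_sum]
    _ = Real.exp (-(lam * a)) * ∏ e, ∑ b, w b * Real.exp (lam * g e b) := by
        rw [Finset.prod_univ_sum, Fintype.piFinset_univ]
    _ ≤ Real.exp (-(lam * a)) * ∏ e, Real.exp (V' e) := by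
        apply mul_le_mul_of_nonneg_left _ (Real.exp_nonneg _)
        apply Finset.prod_le_prod (fun e _ => Finset.sum_nonneg fun b _ =>
          mul_nonneg (hw b) (Real.exp_nonneg _)) (fun e _ => hM e)
    _ = Real.exp ((∑ e, V' e) - lam * a) := by
        rw [← Real.exp_sum, ← Real.exp_add]; congr 1; ring

open scoped Classical in
lemma cnc_sum_g1 {k : ℕ} (p : ℝ) (J : Finset (Fin k)) (i : Fin k) (hiJ : i ∉ J)
    (ω : Sym2 (Fin k) → Bool × Bool × Bool) :
    ∑ e : Sym2 (Fin k), (if e ∈ J.image (fun j => s(i, j)) then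
        (if (ω e).1 = true ∧ (ω e).2.1 = true then (1:ℝ) else 0) - p else 0)
      = ((J.filter fun j => (corrGraph1 k ω).Adj i j).card : ℝ) - p * J.card := by
  have hfinj : Function.Injective (fun j : Fin k => s(i, j)) :=
    fun a b h => Sym2.congr_right.mp h
  rw [Finset.sum_ite_mem, Finset.univ_inter,
    Finset.sum_image (fun x _ y _ h => hfinj h)]
  have adj1 : ∀ j ∈ J, ((corrGraph1 k ω).Adj i j ↔
      ((ω s(i, j)).1 = true ∧ (ω s(i, j)).2.1 = true)) := by
    intro j hj
    have hij : i ≠ j := by rintro rfl; exact hiJ hj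
    have hsw : s(j, i) = s(i, j) := Sym2.eq_swap
    simp [corrGraph1, SimpleGraph.fromRel_adj, hsw, hij]
  rw [Finset.sum_sub_distrib, Finset.sum_const, nsmul_eq_mul]
  have h2 : ∑ j ∈ J, (if (ω s(i, j)).1 = true ∧ (ω s(i, j)).2.1 = true then (1:ℝ) else 0)
      = ((J.filter fun j => (corrGraph1 k ω).Adj i j).card : ℝ) := by
    rw [← Finset.sum_boole]
    exact Finset.sum_congr rfl fun j hj => if_congr (adj1 j hj).symm rfl rfl
  rw [h2]
  ring

open scoped Classical in
lemma cnc_sum_g2 {k : ℕ} (p : ℝ) (J' : Finset (Fin k)) (i : Fin k) (hiJ' : i ∉ J')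
    (ω : Sym2 (Fin k) → Bool × Bool × Bool) :
    ∑ e : Sym2 (Fin k), (if e ∈ J'.image (fun j => s(i, j)) then
        (if (ω e).1 = true ∧ (ω e).2.2 = true then (1:ℝ) else 0) - p else 0)
      = ((J'.filter fun j => (corrGraph2 k ω).Adj i j).card : ℝ) - p * J'.card := by
  have hfinj : Function.Injective (fun j : Fin k => s(i, j)) :=
    fun a b h => Sym2.congr_right.mp h
  rw [Finset.sum_ite_mem, Finset.univ_inter,
    Finset.sum_image (fun x _ y _ h => hfinj h)]
  have adj1 : ∀ j ∈ J', ((corrGraph2 k ω).Adj i j ↔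
      ((ω s(i, j)).1 = true ∧ (ω s(i, j)).2.2 = true)) := by
    intro j hj
    have hij : i ≠ j := by rintro rfl; exact hiJ' hj
    have hsw : s(j, i) = s(i, j) := Sym2.eq_swap
    simp [corrGraph2, SimpleGraph.fromRel_adj, hsw, hij]
  rw [Finset.sum_sub_distrib, Finset.sum_const, nsmul_eq_mul]
  have h2 : ∑ j ∈ J', (if (ω s(i, j)).1 = true ∧ (ω s(i, j)).2.2 = true then (1:ℝ) else 0)
      = ((J'.filter fun j => (corrGraph2 k ω).Adj i j).card : ℝ) := by
    rw [← Finset.sum_boole]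
    exact Finset.sum_congr rfl fun j hj => if_congr (adj1 j hj).symm rfl rfl
  rw [h2]
  ring

open scoped Classical in
/-- Fluctuations of correlated neighbor counts: for `Γ₀ ~ G(k, p/(1-α))` and `Γ, Γ'`
obtained by retaining each edge independently with probability `1-α`, for fixed
`J, J' ⊆ [k]` and a vertex `i ∉ J ∪ J'`, with probability at least
`1 - 6 e^{-t} - 2 exp(-p|J∩J'|/(3(1-α)))`,
`| |N_Γ(i;J)| - p|J| - |N_{Γ'}(i;J')| + p|J'| | ≤ 4(t + √(tαp|J∩J'|) + √(tp|J△J'|))`. -/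
theorem correlated_neighbor_count (k : ℕ) (hk : 0 < k) (p α : ℝ)
    (hp0 : 0 < p) (hp1 : p < 1) (hα0 : 0 ≤ α) (hα1 : α ≤ 1 - p)
    (J J' : Finset (Fin k)) (i : Fin k) (hi : i ∉ J ∪ J') (t : ℝ) (ht : 0 < t) :
    1 - 6 * Real.exp (-t) - 2 * Real.exp (-(p * ((J ∩ J').card : ℝ)) / (3 * (1 - α))) ≤
      ∑ ω : Sym2 (Fin k) → Bool × Bool × Bool,
        (if |((J.filter fun j => (corrGraph1 k ω).Adj i j).card : ℝ) - p * J.card -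
              ((J'.filter fun j => (corrGraph2 k ω).Adj i j).card : ℝ) + p * J'.card| ≤
            4 * (t + Real.sqrt (t * α * p * ((J ∩ J').card : ℝ)) +
              Real.sqrt (t * p * ((((J \ J') ∪ (J' \ J))).card : ℝ)))
          then ∏ e : Sym2 (Fin k), tripleWeight p α (ω e) else 0) := by
  have hiJ : i ∉ J := fun h => hi (Finset.mem_union_left _ h)
  have hiJ' : i ∉ J' := fun h => hi (Finset.mem_union_right _ h)
  have h1α : (0:ℝ) < 1 - α := by linarith
  obtain ⟨f, hf⟩ : ∃ f : Fin k → Sym2 (Fin k), f = fun j => s(i, j) := ⟨_, rfl⟩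
  have hfinj : Function.Injective f := by
    rw [hf]; exact fun a b h => Sym2.congr_right.mp h
  obtain ⟨m, hm⟩ : ∃ m : ℝ, m = ((J ∩ J').card : ℝ) := ⟨_, rfl⟩
  obtain ⟨sΔ, hsd⟩ : ∃ s : ℝ, s = (((J \ J') ∪ (J' \ J)).card : ℝ) := ⟨_, rfl⟩
  rw [← hm, ← hsd]
  have hm0 : 0 ≤ m := by rw [hm]; exact Nat.cast_nonneg _
  have hs0 : 0 ≤ sΔ := by rw [hsd]; exact Nat.cast_nonneg _
  obtain ⟨v, hv⟩ : ∃ v : ℝ, v = 2 * α * p * m + p * sΔ := ⟨_, rfl⟩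
  have hv0 : 0 ≤ v := by
    rw [hv]
    have := mul_nonneg (mul_nonneg (mul_nonneg (by norm_num : (0:ℝ) ≤ 2) hα0) hp0.le) hm0
    have := mul_nonneg hp0.le hs0
    linarith
  obtain ⟨a, ha⟩ : ∃ a : ℝ,
      a = 4 * (t + Real.sqrt (t * α * p * m) + Real.sqrt (t * p * sΔ)) := ⟨_, rfl⟩
  rw [← ha]
  obtain ⟨lam, hlam⟩ : ∃ l : ℝ, l = if t ≤ v then Real.sqrt (t / v) else 1 := ⟨_, rfl⟩
  have hlam_pos : 0 < lam := by
    rw [hlam]; split_ifs with h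
    · exact Real.sqrt_pos.mpr (div_pos ht (lt_of_lt_of_le ht h))
    · norm_num
  have hlam_le : lam ≤ 1 := by
    rw [hlam]; split_ifs with h
    · exact Real.sqrt_le_one.mpr ((div_le_one (lt_of_lt_of_le ht h)).mpr h)
    · exact le_refl 1
  have hsq1 : 0 ≤ Real.sqrt (t * α * p * m) := Real.sqrt_nonneg _
  have hsq2 : 0 ≤ Real.sqrt (t * p * sΔ) := Real.sqrt_nonneg _
  have hkey : lam ^ 2 * v + t ≤ lam * a := by
    rw [hlam]
    split_ifs with h
    · have hvpos : 0 < v := lt_of_lt_of_le ht h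
      have htv0 : 0 ≤ t / v := div_nonneg ht.le hv0
      have h9 : 0 ≤ t * α * p * m :=
        mul_nonneg (mul_nonneg (mul_nonneg ht.le hα0) hp0.le) hm0
      have h10 : 0 ≤ t * p * sΔ := mul_nonneg (mul_nonneg ht.le hp0.le) hs0
      have hsq : Real.sqrt (t / v) ^ 2 = t / v := Real.sq_sqrt htv0
      have h2 : Real.sqrt (t / v) * Real.sqrt (t * v) = t := by
        rw [← Real.sqrt_mul htv0, show t / v * (t * v) = t ^ 2 by
          field_simp]
        exact Real.sqrt_sq ht.le
      have h3 : Real.sqrt (t * v) ≤ Real.sqrt (2 * (t * α * p * m)) + Real.sqrt (t * p * sΔ) := by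
        rw [show t * v = 2 * (t * α * p * m) + t * p * sΔ by rw [hv]; ring]
        exact cnc_sqrt_add_le _ _ (by linarith) h10
      have h4 : Real.sqrt (2 * (t * α * p * m)) ≤ 2 * Real.sqrt (t * α * p * m) := by
        rw [Real.sqrt_mul (by norm_num : (0:ℝ) ≤ 2)]
        have h5 : Real.sqrt 2 ≤ 2 := by
          nlinarith [Real.sq_sqrt (by norm_num : (0:ℝ) ≤ 2), Real.sqrt_nonneg 2]
        nlinarith [Real.sqrt_nonneg (t * α * p * m)]
      have h6 : 2 * Real.sqrt (t * v) ≤ a := by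
        rw [ha]; linarith
      have h7 : Real.sqrt (t / v) ^ 2 * v = t := by
        rw [hsq]; field_simp
      rw [h7]
      have h8 : t + t = Real.sqrt (t / v) * (2 * Real.sqrt (t * v)) := by
        rw [show Real.sqrt (t / v) * (2 * Real.sqrt (t * v))
          = 2 * (Real.sqrt (t / v) * Real.sqrt (t * v)) by ring, h2]; ring
      rw [h8]
      exact mul_le_mul_of_nonneg_left h6 (Real.sqrt_nonneg _)
    · push_neg at h
      rw [ha]; nlinarith
  -- definitions of g and V'
  obtain ⟨g, hg⟩ : ∃ g : Sym2 (Fin k) → Bool × Bool × Bool → ℝ, g = fun e b =>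
    (if e ∈ J.image f then (if b.1 = true ∧ b.2.1 = true then (1:ℝ) else 0) - p else 0) -
    (if e ∈ J'.image f then (if b.1 = true ∧ b.2.2 = true then (1:ℝ) else 0) - p else 0) :=
    ⟨_, rfl⟩
  obtain ⟨V', hV⟩ : ∃ V' : Sym2 (Fin k) → ℝ, V' = fun e =>
    if e ∈ (J ∩ J').image f then 2 * α * p * lam ^ 2
    else if e ∈ ((J \ J') ∪ (J' \ J)).image f then p * lam ^ 2 else 0 := ⟨_, rfl⟩
  have hwn : ∀ b, 0 ≤ tripleWeight p α b := cnc_weight_nonneg hp0 hp1 hα0 hα1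
  -- MGF bound
  have hM : ∀ σ : ℝ, |σ| = 1 → ∀ e,
      ∑ b, tripleWeight p α b * Real.exp (lam * (σ * g e b)) ≤ Real.exp (V' e) := by
    intro σ hσ e
    have hμabs : |lam * σ| ≤ 1 := by
      rw [abs_mul, hσ, mul_one, abs_of_pos hlam_pos]; exact hlam_le
    have hσsq : σ ^ 2 = 1 := by
      rcases (abs_eq (by norm_num : (0:ℝ) ≤ 1)).mp hσ with h | h <;> rw [h] <;> ring
    have hμsq : (lam * σ) ^ 2 = lam ^ 2 := by rw [mul_pow, hσsq, mul_one]
    by_cases hJe : e ∈ J.image f <;> by_cases hJ'e : e ∈ J'.image f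
    · -- both
      have hmem : e ∈ (J ∩ J').image f := by
        rw [Finset.image_inter _ _ hfinj]; exact Finset.mem_inter.mpr ⟨hJe, hJ'e⟩
      have hVe : V' e = 2 * α * p * lam ^ 2 := by rw [hV]; simp [hmem]
      rw [hVe]
      have harg : ∀ b : Bool × Bool × Bool, lam * (σ * g e b) =
          (lam * σ) * ((if b.1 = true ∧ b.2.1 = true then (1:ℝ) else 0) -
            (if b.1 = true ∧ b.2.2 = true then (1:ℝ) else 0)) := by
        intro b
        simp only [hg]
        rw [if_pos hJe, if_pos hJ'e]
        ring
      calc ∑ b, tripleWeight p α b * Real.exp (lam * (σ * g e b))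
          = ∑ b : Bool × Bool × Bool, tripleWeight p α b *
              Real.exp ((lam * σ) * ((if b.1 = true ∧ b.2.1 = true then (1:ℝ) else 0) -
                (if b.1 = true ∧ b.2.2 = true then (1:ℝ) else 0))) :=
            Finset.sum_congr rfl fun b _ => by rw [harg b]
        _ = 1 + p * α * (Real.exp (lam * σ) + Real.exp (-(lam * σ)) - 2) :=
            cnc_mgf_pair hp0 hα1 _
        _ ≤ Real.exp (2 * α * p * (lam * σ) ^ 2) := cnc_pair_le hp0.le hα0 hμabs
        _ = Real.exp (2 * α * p * lam ^ 2) := by rw [hμsq]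
    · -- J only
      have hnmem : e ∉ (J ∩ J').image f := by
        rw [Finset.image_inter _ _ hfinj]
        intro hcon; exact hJ'e (Finset.mem_inter.mp hcon).2
      have hmem2 : e ∈ ((J \ J') ∪ (J' \ J)).image f := by
        rw [Finset.image_union]
        apply Finset.mem_union_left
        rw [Finset.image_sdiff _ _ hfinj]
        exact Finset.mem_sdiff.mpr ⟨hJe, hJ'e⟩
      have hVe : V' e = p * lam ^ 2 := by rw [hV]; simp [hnmem, hmem2]
      rw [hVe]
      have harg : ∀ b : Bool × Bool × Bool, lam * (σ * g e b) =
          (lam * σ) * ((if b.1 = true ∧ b.2.1 = true then (1:ℝ) else 0) - p) := by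
        intro b
        simp only [hg]
        rw [if_pos hJe, if_neg hJ'e]
        ring
      calc ∑ b, tripleWeight p α b * Real.exp (lam * (σ * g e b))
          = ∑ b : Bool × Bool × Bool, tripleWeight p α b *
              Real.exp ((lam * σ) * ((if b.1 = true ∧ b.2.1 = true then (1:ℝ) else 0) - p)) :=
            Finset.sum_congr rfl fun b _ => by rw [harg b]
        _ = Real.exp (-((lam * σ) * p)) * (1 + p * (Real.exp (lam * σ) - 1)) :=
            cnc_mgf_single₁ hp0 hα1 _
        _ ≤ Real.exp (p * (lam * σ) ^ 2) := cnc_bern_le hp0.le hμabs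
        _ = Real.exp (p * lam ^ 2) := by rw [hμsq]
    · -- J' only
      have hnmem : e ∉ (J ∩ J').image f := by
        rw [Finset.image_inter _ _ hfinj]
        intro hcon; exact hJe (Finset.mem_inter.mp hcon).1
      have hmem2 : e ∈ ((J \ J') ∪ (J' \ J)).image f := by
        rw [Finset.image_union]
        apply Finset.mem_union_right
        rw [Finset.image_sdiff _ _ hfinj]
        exact Finset.mem_sdiff.mpr ⟨hJ'e, hJe⟩
      have hVe : V' e = p * lam ^ 2 := by rw [hV]; simp [hnmem, hmem2]
      rw [hVe]
      have harg : ∀ b : Bool × Bool × Bool, lam * (σ * g e b) =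
          (-(lam * σ)) * ((if b.1 = true ∧ b.2.2 = true then (1:ℝ) else 0) - p) := by
        intro b
        simp only [hg]
        rw [if_neg hJe, if_pos hJ'e]
        ring
      have hμabs' : |(-(lam * σ))| ≤ 1 := by rwa [abs_neg]
      calc ∑ b, tripleWeight p α b * Real.exp (lam * (σ * g e b))
          = ∑ b : Bool × Bool × Bool, tripleWeight p α b *
              Real.exp ((-(lam * σ)) * ((if b.1 = true ∧ b.2.2 = true then (1:ℝ) else 0) - p)) :=
            Finset.sum_congr rfl fun b _ => by rw [harg b]
        _ = Real.exp (-((-(lam * σ)) * p)) * (1 + p * (Real.exp (-(lam * σ)) - 1)) :=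
            cnc_mgf_single₂ hp0 hα1 _
        _ ≤ Real.exp (p * (-(lam * σ)) ^ 2) := cnc_bern_le hp0.le hμabs'
        _ = Real.exp (p * lam ^ 2) := by rw [neg_pow, hμsq]; ring_nf
    · -- neither
      have hnmem : e ∉ (J ∩ J').image f := fun hcon =>
        hJe (Finset.image_subset_image Finset.inter_subset_left hcon)
      have hnmem2 : e ∉ ((J \ J') ∪ (J' \ J)).image f := by
        rw [Finset.image_union]
        intro hcon
        rcases Finset.mem_union.mp hcon with hc | hc
        · exact hJe (Finset.image_subset_image Finset.sdiff_subset hc)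
        · exact hJ'e (Finset.image_subset_image Finset.sdiff_subset hc)
      have hVe : V' e = 0 := by rw [hV]; simp [hnmem, hnmem2]
      rw [hVe, Real.exp_zero]
      have harg : ∀ b : Bool × Bool × Bool, lam * (σ * g e b) = 0 := by
        intro b
        simp only [hg]
        rw [if_neg hJe, if_neg hJ'e]
        ring
      have hc : ∑ b, tripleWeight p α b * Real.exp (lam * (σ * g e b))
          = ∑ b : Bool × Bool × Bool, tripleWeight p α b := by
        refine Finset.sum_congr rfl fun b _ => ?_
        rw [harg b, Real.exp_zero, mul_one]
      rw [hc, cnc_weight_sum_one hp0 hα1]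
  -- sum of V'
  have hVsum : ∑ e, V' e = lam ^ 2 * v := by
    have hdisj : Disjoint ((J ∩ J').image f) (((J \ J') ∪ (J' \ J)).image f) := by
      rw [Finset.disjoint_left]
      intro x hx hx'
      rw [Finset.image_inter _ _ hfinj] at hx
      rw [Finset.image_union, Finset.image_sdiff _ _ hfinj,
        Finset.image_sdiff _ _ hfinj] at hx'
      rcases Finset.mem_union.mp hx' with hc | hc
      · exact (Finset.mem_sdiff.mp hc).2 (Finset.mem_inter.mp hx).2
      · exact (Finset.mem_sdiff.mp hc).2 (Finset.mem_inter.mp hx).1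
    calc ∑ e, V' e
        = ∑ e : Sym2 (Fin k),
            ((if e ∈ (J ∩ J').image f then 2 * α * p * lam ^ 2 else 0) +
             (if e ∈ ((J \ J') ∪ (J' \ J)).image f then p * lam ^ 2 else 0)) := by
          refine Finset.sum_congr rfl fun e _ => ?_
          rw [hV]
          by_cases h1 : e ∈ (J ∩ J').image f
          · have h2 : e ∉ ((J \ J') ∪ (J' \ J)).image f := Finset.disjoint_left.mp hdisj h1
            simp [h1, h2]
          · simp [h1]
      _ = ((J ∩ J').image f).card * (2 * α * p * lam ^ 2) +
          (((J \ J') ∪ (J' \ J)).image f).card * (p * lam ^ 2) := by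
          rw [Finset.sum_add_distrib, Finset.sum_ite_mem, Finset.sum_ite_mem,
            Finset.univ_inter, Finset.univ_inter, Finset.sum_const, Finset.sum_const,
            nsmul_eq_mul, nsmul_eq_mul]
      _ = lam ^ 2 * v := by
          rw [Finset.card_image_of_injective _ hfinj, Finset.card_image_of_injective _ hfinj,
            ← hm, ← hsd, hv]
          ring
  -- rewrite the summand in terms of g
  have hgood : ∀ ω : Sym2 (Fin k) → Bool × Bool × Bool,
      ((J.filter fun j => (corrGraph1 k ω).Adj i j).card : ℝ) - p * J.card -
        ((J'.filter fun j => (corrGraph2 k ω).Adj i j).card : ℝ) + p * J'.card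
      = ∑ e, g e (ω e) := by
    intro ω
    simp only [hg]
    rw [Finset.sum_sub_distrib, hf]
    rw [cnc_sum_g1 p J i hiJ ω, cnc_sum_g2 p J' i hiJ' ω]
    ring
  have hW : ∀ ω : Sym2 (Fin k) → Bool × Bool × Bool,
      (0:ℝ) ≤ ∏ e, tripleWeight p α (ω e) := fun ω => Finset.prod_nonneg fun e _ => hwn _
  have hgoal : (∑ ω : Sym2 (Fin k) → Bool × Bool × Bool,
        (if |((J.filter fun j => (corrGraph1 k ω).Adj i j).card : ℝ) - p * J.card -
              ((J'.filter fun j => (corrGraph2 k ω).Adj i j).card : ℝ) + p * J'.card| ≤ a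
          then ∏ e : Sym2 (Fin k), tripleWeight p α (ω e) else 0))
      = ∑ ω : Sym2 (Fin k) → Bool × Bool × Bool,
        (if |∑ e, g e (ω e)| ≤ a then ∏ e : Sym2 (Fin k), tripleWeight p α (ω e) else 0) :=
    Finset.sum_congr rfl fun ω _ => by rw [hgood ω]
  rw [hgoal]
  -- total mass is 1
  have htot : ∑ ω : Sym2 (Fin k) → Bool × Bool × Bool,
      ∏ e, tripleWeight p α (ω e) = 1 := by
    have h := Finset.prod_univ_sum (fun _ : Sym2 (Fin k) => (Finset.univ : Finset (Bool × Bool × Bool)))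
      (fun _ b => tripleWeight p α b)
    rw [Fintype.piFinset_univ] at h
    rw [← h, Finset.prod_congr rfl fun e _ => cnc_weight_sum_one hp0 hα1,
      Finset.prod_const_one]
  have hsplit : ∑ ω : Sym2 (Fin k) → Bool × Bool × Bool,
      (if |∑ e, g e (ω e)| ≤ a then ∏ e, tripleWeight p α (ω e) else 0)
      = 1 - ∑ ω : Sym2 (Fin k) → Bool × Bool × Bool,
        (if ¬ (|∑ e, g e (ω e)| ≤ a) then ∏ e, tripleWeight p α (ω e) else 0) := by
    rw [eq_sub_iff_add_eq, ← Finset.sum_add_distrib, ← htot]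
    refine Finset.sum_congr rfl fun ω _ => ?_
    by_cases h : |∑ e, g e (ω e)| ≤ a <;> simp [h]
  rw [hsplit]
  -- Chernoff bounds
  have hM1 : ∀ e, ∑ b, tripleWeight p α b * Real.exp (lam * g e b) ≤ Real.exp (V' e) := by
    intro e
    have h := hM 1 (by norm_num) e
    simpa using h
  have hM2 : ∀ e, ∑ b, tripleWeight p α b *
      Real.exp (lam * (fun e b => -(g e b)) e b) ≤ Real.exp (V' e) := by
    intro e
    have h := hM (-1) (by norm_num) e
    simpa [neg_mul, mul_neg] using h
  have hch1 := cnc_chernoff (tripleWeight p α) hwn g lam a hlam_pos.le V' hM1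
  have hch2 := cnc_chernoff (tripleWeight p α) hwn (fun e b => -(g e b)) lam a hlam_pos.le V' hM2
  have hexp : Real.exp ((∑ e, V' e) - lam * a) ≤ Real.exp (-t) := by
    apply Real.exp_le_exp.mpr
    rw [hVsum]
    linarith
  have hbad : ∑ ω : Sym2 (Fin k) → Bool × Bool × Bool,
      (if ¬ (|∑ e, g e (ω e)| ≤ a) then ∏ e, tripleWeight p α (ω e) else 0)
      ≤ Real.exp (-t) + Real.exp (-t) := by
    have hpt : ∀ ω : Sym2 (Fin k) → Bool × Bool × Bool,
        (if ¬ (|∑ e, g e (ω e)| ≤ a) then ∏ e, tripleWeight p α (ω e) else 0) ≤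
        (if a < ∑ e, g e (ω e) then ∏ e, tripleWeight p α (ω e) else 0) +
        (if a < ∑ e, -(g e (ω e)) then ∏ e, tripleWeight p α (ω e) else 0) := by
      intro ω
      by_cases h : |∑ e, g e (ω e)| ≤ a
      · rw [if_neg (by simpa using h)]
        apply add_nonneg <;> (split_ifs; exacts [hW ω, le_refl 0])
      · rw [if_pos h]
        rcases lt_abs.mp (not_le.mp h) with h3 | h3
        · rw [if_pos h3]
          have : (0:ℝ) ≤ if a < ∑ e, -(g e (ω e)) then ∏ e, tripleWeight p α (ω e) else 0 := by
            split_ifs; exacts [hW ω, le_refl 0]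
          linarith
        · have h4 : a < ∑ e, -(g e (ω e)) := by
            rw [Finset.sum_neg_distrib]; exact h3
          rw [if_pos h4]
          have : (0:ℝ) ≤ if a < ∑ e, g e (ω e) then ∏ e, tripleWeight p α (ω e) else 0 := by
            split_ifs; exacts [hW ω, le_refl 0]
          linarith
    calc ∑ ω : Sym2 (Fin k) → Bool × Bool × Bool,
          (if ¬ (|∑ e, g e (ω e)| ≤ a) then ∏ e, tripleWeight p α (ω e) else 0)
        ≤ ∑ ω : Sym2 (Fin k) → Bool × Bool × Bool,
          ((if a < ∑ e, g e (ω e) then ∏ e, tripleWeight p α (ω e) else 0) +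
           (if a < ∑ e, -(g e (ω e)) then ∏ e, tripleWeight p α (ω e) else 0)) :=
          Finset.sum_le_sum fun ω _ => hpt ω
      _ = (∑ ω : Sym2 (Fin k) → Bool × Bool × Bool,
            (if a < ∑ e, g e (ω e) then ∏ e, tripleWeight p α (ω e) else 0)) +
          (∑ ω : Sym2 (Fin k) → Bool × Bool × Bool,
            (if a < ∑ e, -(g e (ω e)) then ∏ e, tripleWeight p α (ω e) else 0)) :=
          Finset.sum_add_distrib
      _ ≤ Real.exp (-t) + Real.exp (-t) := by
          have h1 := hch1.trans hexp
          have h2 := hch2.trans hexp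
          exact add_le_add h1 h2
  have hE1 : (0:ℝ) ≤ Real.exp (-t) := (Real.exp_pos _).le
  have hE2 : (0:ℝ) ≤ Real.exp (-(p * m) / (3 * (1 - α))) := (Real.exp_pos _).le
  linarith
end
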